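/- arXiv:2101.01592 — 6 statements merged into one kernel-verified Lean document; each statement's English description precedes it below -/
import Mathlib

section
/- Let (b, Q, ν) be a Lévy triplet on ℝ^n and f ∈ L^∞(ℝ^n). Then for every compact set K ⊂ ℝ^n there exists a constant C_K > 0 such that for every φ ∈ C_c^∞(ℝ^n) with supp φ ⊆ K, the function x ↦ f(x)·L*φ(x) is Lebesgue integrable and |∫_{ℝ^n} f(x) L*φ(x) dx| ≤ C_K ‖f‖_{L^∞} Σ_{|α| ≤ 2} sup_{x} |∂^α φ(x)|. In other words, φ ↦ ∫ f·L*φ dx defines a distribution on ℝ^n of order at most 2. -/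
open MeasureTheory Complex
open scoped ENNReal Topology Pointwise

noncomputable section

abbrev En (n : ℕ) : Type := EuclideanSpace ℝ (Fin n)

/-- A Lévy triplet `(b, Q, ν)` on `ℝ^n`. -/
structure LevyTriplet (n : ℕ) where
  b : En n
  Q : Matrix (Fin n) (Fin n) ℝ
  ν : Measure (En n)
  hQsymm : Q.IsSymm
  hQpos : Q.PosSemidef
  hν0 : ν {0} = 0
  hνint : ∫⁻ x, ENNReal.ofReal (min (‖x‖ ^ 2) 1) ∂ν < ⊤

namespace LevyTriplet

variable {n : ℕ}

/-- The characteristic exponent `ψ` of a Lévy triplet. -/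
def charExp (T : LevyTriplet n) (ξ : En n) : ℂ :=
  -Complex.I * ((inner ℝ T.b ξ : ℝ) : ℂ)
    + (1 / 2 : ℂ) * (((∑ i, ∑ j, T.Q i j * ξ i * ξ j : ℝ)) : ℂ)
    + ∫ x, (1 - Complex.exp (Complex.I * ((inner ℝ ξ x : ℝ) : ℂ))
        + Complex.I * ((inner ℝ ξ x : ℝ) : ℂ)
          * ({y : En n | ‖y‖ < 1}.indicator (fun _ => (1 : ℂ)) x)) ∂T.ν

/-- The adjoint Lévy operator `L*` of a Lévy triplet. -/
def adjOp (T : LevyTriplet n) (u : En n → ℝ) (x : En n) : ℝ :=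
  -(fderiv ℝ u x T.b)
    + (1 / 2) * ∑ i, ∑ j, T.Q i j *
        fderiv ℝ (fun z => fderiv ℝ u z (EuclideanSpace.single j 1)) x (EuclideanSpace.single i 1)
    + ∫ y, (u (x - y) - u x
        + fderiv ℝ u x y * ({z : En n | ‖z‖ < 1}.indicator (fun _ => (1 : ℝ)) y)) ∂T.ν

end LevyTriplet

/-- Test functions: smooth and compactly supported. -/
def IsTestFun {n : ℕ} (φ : En n → ℝ) : Prop :=
  ContDiff ℝ (⊤ : ℕ∞) φ ∧ HasCompactSupport φ

/-- `L_ψ f = 0` weakly. -/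
def WeakLpsiZero {n : ℕ} (T : LevyTriplet n) (f : En n → ℝ) : Prop :=
  ∀ φ : En n → ℝ, IsTestFun φ →
    Integrable (fun x => f x * T.adjOp φ x) volume ∧
    ∫ x, f x * T.adjOp φ x = 0

/-- The transition semigroup `(μ_t)` of a Lévy triplet. -/
def IsTransitionSemigroup {n : ℕ} (T : LevyTriplet n) (μ : ℝ → Measure (En n)) : Prop :=
  (∀ t : ℝ, 0 ≤ t → IsProbabilityMeasure (μ t)) ∧
  (∀ t : ℝ, 0 ≤ t → ∀ ξ : En n,
    ∫ x, Complex.exp (Complex.I * ((inner ℝ ξ x : ℝ) : ℂ)) ∂(μ t)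
      = Complex.exp (-(t : ℂ) * T.charExp ξ))

/-- Submultiplicative function: `g(x+y) ≤ c g(x) g(y)`. -/
def Submultiplicative {n : ℕ} (g : En n → ℝ) : Prop :=
  ∃ c : ℝ, 0 < c ∧ ∀ x y : En n, g (x + y) ≤ c * g x * g y

/-- Locally bounded function. -/
def LocallyBdd {n : ℕ} (g : En n → ℝ) : Prop :=
  ∀ K : Set (En n), IsCompact K → ∃ M : ℝ, ∀ x ∈ K, g x ≤ M

/-- Topological support of a measure. -/
def measSupport {n : ℕ} (μ : Measure (En n)) : Set (En n) :=
  {x | ∀ U : Set (En n), IsOpen U → x ∈ U → 0 < μ U}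

/-- The analytically extended exponent `ψ†(η) = ψ(-iη)`. -/
def LevyTriplet.psiDagger {n : ℕ} (T : LevyTriplet n) (η : En n) : ℝ :=
  -(inner ℝ T.b η : ℝ) - (1 / 2) * (∑ i, ∑ j, T.Q i j * η i * η j)
    + ∫ x, (1 - Real.exp (inner ℝ η x : ℝ) + (inner ℝ η x : ℝ)
        * ({z : En n | ‖z‖ < 1}.indicator (fun _ => (1 : ℝ)) x)) ∂T.ν

/-- The (weak) Liouville property for `L_ψ`: every bounded weak solution of
`L_ψ f = 0` is a.e. constant. -/
def LiouvilleProperty {n : ℕ} (T : LevyTriplet n) : Prop :=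
  ∀ f : En n → ℝ, MemLp f ⊤ volume → WeakLpsiZero T f →
    ∃ c : ℝ, f =ᵐ[volume] fun _ => c

set_option maxHeartbeats 1000000 in
/-- For `f ∈ L^∞(ℝ^n)`, the map `φ ↦ ∫ f · L*φ dx` defines a
distribution of order at most 2. -/
theorem statement0 {n : ℕ} (hn : 0 < n) (T : LevyTriplet n) (f : En n → ℝ)
    (hf : MemLp f ⊤ (volume : Measure (En n))) :
    ∀ K : Set (En n), IsCompact K →
      ∃ C : ℝ, 0 < C ∧ ∀ φ : En n → ℝ, IsTestFun φ → tsupport φ ⊆ K →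
        Integrable (fun x => f x * T.adjOp φ x) volume ∧
        |∫ x, f x * T.adjOp φ x| ≤
          C * (eLpNorm f ⊤ volume).toReal *
            ∑ k ∈ Finset.range 3, ⨆ x : En n, ‖iteratedFDeriv ℝ k φ x‖ := by

  intro K hK
  classical
  obtain ⟨hfm, hftop⟩ := hf
  set M := (eLpNorm f ⊤ (volume : Measure (En n))).toReal with hMdef
  have hM0 : 0 ≤ M := ENNReal.toReal_nonneg
  have hfM : ∀ᵐ x ∂(volume : Measure (En n)), ‖f x‖ ≤ M := by
    filter_upwards [ae_le_eLpNormEssSup (f := f) (μ := (volume : Measure (En n)))] with x hx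
    have h1 : (‖f x‖₊ : ℝ≥0∞) ≤ eLpNorm f ⊤ (volume : Measure (En n)) := by
      rwa [eLpNorm_exponent_top]
    have := ENNReal.toReal_mono hftop.ne h1
    rw [hMdef]; simpa using this
  -- the tail set
  set Sset : Set (En n) := {y : En n | 1 ≤ ‖y‖} with hSset
  have hSm : MeasurableSet Sset := (isClosed_le continuous_const continuous_norm).measurableSet
  have htail : T.ν Sset ≠ ⊤ := by
    have key : T.ν Sset ≤ ∫⁻ y, ENNReal.ofReal (min (‖y‖ ^ 2) 1) ∂T.ν := by
      have h0 : T.ν Sset = ∫⁻ y, Sset.indicator (fun _ => (1 : ℝ≥0∞)) y ∂T.ν := by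
        rw [lintegral_indicator hSm]; simp
      rw [h0]
      refine lintegral_mono fun y => ?_
      by_cases hy : y ∈ Sset
      · have h1 : min (‖y‖ ^ 2) 1 = 1 := min_eq_right (by
          have : (1:ℝ) ≤ ‖y‖ := hy
          nlinarith)
        simp [Set.indicator_of_mem hy, h1]
      · simp [Set.indicator_of_notMem hy]
    exact (lt_of_le_of_lt key T.hνint).ne
  have hmin : Integrable (fun y => min (‖y‖ ^ 2) 1) T.ν := by
    refine ⟨((continuous_norm.pow 2).min continuous_const).aestronglyMeasurable, ?_⟩
    rw [hasFiniteIntegral_iff_ofReal (Filter.Eventually.of_forall fun y => by positivity)]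
    exact T.hνint
  set Cν := ∫ y, min (‖y‖ ^ 2) 1 ∂T.ν with hCνdef
  have hCν0 : 0 ≤ Cν := integral_nonneg fun y => by positivity
  set νt := (T.ν Sset).toReal with hνtdef
  have hνt0 : 0 ≤ νt := ENNReal.toReal_nonneg
  set K1 := Metric.cthickening 1 K with hK1def
  have hK1c : IsCompact K1 := hK.cthickening
  have hK1m : MeasurableSet K1 := hK1c.isClosed.measurableSet
  have hKK1 : K ⊆ K1 := Metric.self_subset_cthickening K
  set vK1 := ((volume : Measure (En n)) K1).toReal with hvK1def
  set vK := ((volume : Measure (En n)) K).toReal with hvKdef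
  have hvK10 : 0 ≤ vK1 := ENNReal.toReal_nonneg
  have hvK0 : 0 ≤ vK := ENNReal.toReal_nonneg
  set Qs := ∑ i, ∑ j, |T.Q i j| with hQsdef
  have hQs0 : 0 ≤ Qs := Finset.sum_nonneg fun i _ => Finset.sum_nonneg fun j _ => abs_nonneg _
  refine ⟨(‖T.b‖ + Qs + Cν + νt) * vK1 + νt * vK + 1, by positivity, ?_⟩
  rintro φ ⟨hφs, hφc⟩ hφK
  -- smoothness facts
  have hφd : Differentiable ℝ φ := hφs.differentiable (by simp)
  have hφ' : ContDiff ℝ (⊤ : ℕ∞) (fderiv ℝ φ) := hφs.fderiv_right (by simp)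
  have hφ'd : Differentiable ℝ (fderiv ℝ φ) := hφ'.differentiable (by simp)
  -- the sup norms
  set S : ℕ → ℝ := fun k => ⨆ x : En n, ‖iteratedFDeriv ℝ k φ x‖ with hSdef
  have hbdd : ∀ k : ℕ, BddAbove (Set.range fun x : En n => ‖iteratedFDeriv ℝ k φ x‖) := by
    intro k
    exact (hφs.continuous_iteratedFDeriv (mod_cast le_top)).norm.bddAbove_range_of_hasCompactSupport
      (hφc.iteratedFDeriv k).norm
  have hSk : ∀ (k : ℕ) (x : En n), ‖iteratedFDeriv ℝ k φ x‖ ≤ S k := fun k x => le_ciSup (hbdd k) x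
  have hSnn : ∀ k, 0 ≤ S k := fun k => Real.iSup_nonneg fun x => norm_nonneg _
  have hS0' : ∀ x, ‖φ x‖ ≤ S 0 := by
    intro x; have := hSk 0 x; rwa [norm_iteratedFDeriv_zero] at this
  have hS1' : ∀ x, ‖fderiv ℝ φ x‖ ≤ S 1 := by
    intro x; have := hSk 1 x
    rwa [← norm_iteratedFDeriv_fderiv (n := 0), norm_iteratedFDeriv_zero] at this
  have hS2' : ∀ x, ‖fderiv ℝ (fderiv ℝ φ) x‖ ≤ S 2 := by
    intro x; have := hSk 2 x
    rwa [← norm_iteratedFDeriv_fderiv (n := 1), ← norm_iteratedFDeriv_fderiv (n := 0),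
      norm_iteratedFDeriv_zero] at this
  have hsum : (∑ k ∈ Finset.range 3, ⨆ x : En n, ‖iteratedFDeriv ℝ k φ x‖) = S 0 + S 1 + S 2 := by
    rw [hSdef]
    rw [Finset.sum_range_succ, Finset.sum_range_succ, Finset.sum_range_one]
  -- Taylor estimate
  have hTay : ∀ x y : En n, ‖φ (x - y) - φ x + fderiv ℝ φ x y‖ ≤ S 2 * ‖y‖ ^ 2 := by
    intro x y
    have hlip : ∀ z : En n, ‖fderiv ℝ φ z - fderiv ℝ φ x‖ ≤ S 2 * ‖z - x‖ := fun z =>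
      convex_univ.norm_image_sub_le_of_norm_fderiv_le (fun w _ => hφ'd w)
        (fun w _ => hS2' w) (Set.mem_univ x) (Set.mem_univ z)
    set L := fderiv ℝ φ x with hL
    have hmem1 : x ∈ Metric.closedBall x ‖y‖ := Metric.mem_closedBall_self (norm_nonneg y)
    have hmem2 : x - y ∈ Metric.closedBall x ‖y‖ := by
      rw [Metric.mem_closedBall, dist_eq_norm]
      simp
    have key := (convex_closedBall x ‖y‖).norm_image_sub_le_of_norm_fderiv_le
      (f := fun w => φ w - L w) (C := S 2 * ‖y‖)
      (fun z _ => (hφd z).sub L.differentiableAt)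
      (fun z hz => by
        rw [fderiv_fun_sub (hφd z) L.differentiableAt, L.fderiv]
        refine (hlip z).trans ?_
        have hz' : ‖z - x‖ ≤ ‖y‖ := by rwa [Metric.mem_closedBall, dist_eq_norm] at hz
        exact mul_le_mul_of_nonneg_left hz' (hSnn 2))
      hmem1 hmem2
    have heq : φ (x - y) - L (x - y) - (φ x - L x) = φ (x - y) - φ x + L y := by
      have h1 : L x - L (x - y) = L y := by
        rw [← map_sub]; congr 1; abel
      linarith [h1]
    have hnrm : ‖x - y - x‖ = ‖y‖ := by
      have : x - y - x = -y := by abel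
      rw [this, norm_neg]
    rw [heq, hnrm] at key
    calc ‖φ (x - y) - φ x + L y‖ ≤ S 2 * ‖y‖ * ‖y‖ := key
      _ = S 2 * ‖y‖ ^ 2 := by ring
  -- second derivative entries
  have hd2 : ∀ (i j : Fin n) (x : En n),
      |fderiv ℝ (fun z => fderiv ℝ φ z (EuclideanSpace.single j 1)) x (EuclideanSpace.single i 1)|
        ≤ S 2 := by
    intro i j x
    have hder : fderiv ℝ (fun z => fderiv ℝ φ z (EuclideanSpace.single j 1)) x
        = (fderiv ℝ (fderiv ℝ φ) x).flip (EuclideanSpace.single j 1) := by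
      rw [fderiv_clm_apply (hφ'd x) (differentiableAt_const _)]
      simp
    rw [hder, ← Real.norm_eq_abs]
    calc ‖(fderiv ℝ (fderiv ℝ φ) x).flip (EuclideanSpace.single j 1) (EuclideanSpace.single i 1)‖
        ≤ ‖(fderiv ℝ (fderiv ℝ φ) x).flip (EuclideanSpace.single j 1)‖ *
            ‖(EuclideanSpace.single i 1 : En n)‖ := ContinuousLinearMap.le_opNorm _ _
      _ ≤ ‖(fderiv ℝ (fderiv ℝ φ) x).flip‖ * ‖(EuclideanSpace.single j 1 : En n)‖ *
            ‖(EuclideanSpace.single i 1 : En n)‖ := by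
          gcongr
          exact ContinuousLinearMap.le_opNorm _ _
      _ ≤ S 2 := by
          rw [ContinuousLinearMap.opNorm_flip]
          simp only [EuclideanSpace.norm_single, norm_one, mul_one]
          exact hS2' x
  -- vanishing outside the support
  have hfd0 : ∀ x : En n, x ∉ tsupport φ → fderiv ℝ φ x = 0 := fun x hx =>
    fderiv_of_notMem_tsupport (𝕜 := ℝ) hx
  have htsub : ∀ j : Fin n,
      tsupport (fun z => fderiv ℝ φ z (EuclideanSpace.single j 1)) ⊆ tsupport φ := by
    intro j
    refine closure_minimal ?_ (isClosed_tsupport φ)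
    intro z hz
    by_contra hzt
    rw [Function.mem_support] at hz
    rw [hfd0 z hzt] at hz
    simp at hz
  have hfdd0 : ∀ (j : Fin n) (x : En n), x ∉ tsupport φ →
      fderiv ℝ (fun z => fderiv ℝ φ z (EuclideanSpace.single j 1)) x = 0 := by
    intro j x hx
    exact fderiv_of_notMem_tsupport (𝕜 := ℝ) fun h => hx (htsub j h)
  -- the jump integrand
  set Fi : En n → En n → ℝ := fun x y => φ (x - y) - φ x
      + fderiv ℝ φ x y * ({z : En n | ‖z‖ < 1}.indicator (fun _ => (1 : ℝ)) y) with hFi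
  have hBm : MeasurableSet {z : En n | ‖z‖ < 1} :=
    (isOpen_lt continuous_norm continuous_const).measurableSet
  have hadj_eq : ∀ x, T.adjOp φ x = -(fderiv ℝ φ x T.b)
      + (1 / 2) * ∑ i, ∑ j, T.Q i j *
          fderiv ℝ (fun z => fderiv ℝ φ z (EuclideanSpace.single j 1)) x
            (EuclideanSpace.single i 1)
      + ∫ y, Fi x y ∂T.ν := fun x => rfl
  have hFim : ∀ x, AEStronglyMeasurable (Fi x) T.ν := by
    intro x
    refine AEStronglyMeasurable.add ?_ ?_
    · exact ((hφs.continuous.comp (continuous_const.sub continuous_id)).sub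
        continuous_const).aestronglyMeasurable
    · exact (fderiv ℝ φ x).continuous.aestronglyMeasurable.mul
        ((measurable_const.indicator hBm).aestronglyMeasurable)
  set Hdom : En n → ℝ := fun y => (S 0 + S 2) * min (‖y‖ ^ 2) 1
      + Sset.indicator (fun _ => S 0) y with hHdom
  have hind_int : Integrable (Sset.indicator fun _ => S 0) T.ν :=
    (integrable_indicator_iff hSm).2 ((integrableOn_const_iff).2 (Or.inr htail.lt_top))
  have hHdom_int : Integrable Hdom T.ν := (hmin.const_mul _).add hind_int
  have hFb : ∀ x y, ‖Fi x y‖ ≤ Hdom y := by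
    intro x y
    by_cases hy : ‖y‖ < 1
    · have hyS : y ∉ Sset := by simpa [hSset] using hy
      have hyB : y ∈ {z : En n | ‖z‖ < 1} := hy
      have hFieq : Fi x y = φ (x - y) - φ x + fderiv ℝ φ x y := by
        rw [hFi]; simp [Set.indicator_of_mem hyB]
      have hmin_eq : min (‖y‖ ^ 2) 1 = ‖y‖ ^ 2 := min_eq_left (by nlinarith [norm_nonneg y])
      have hHy : Hdom y = (S 0 + S 2) * min (‖y‖ ^ 2) 1 + Sset.indicator (fun _ => S 0) y := rfl
      rw [hHy, hFieq, Set.indicator_of_notMem hyS, hmin_eq]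
      have := hTay x y
      nlinarith [hSnn 0, norm_nonneg y, sq_nonneg ‖y‖]
    · have hyS : y ∈ Sset := by simpa [hSset] using hy
      have hyB : y ∉ {z : En n | ‖z‖ < 1} := hy
      have hFieq : Fi x y = φ (x - y) - φ x := by
        rw [hFi]; simp [Set.indicator_of_notMem hyB]
      have hmin_eq : min (‖y‖ ^ 2) 1 = 1 := min_eq_right (by
        have h1 : (1:ℝ) ≤ ‖y‖ := not_lt.mp hy
        nlinarith)
      have hHy : Hdom y = (S 0 + S 2) * min (‖y‖ ^ 2) 1 + Sset.indicator (fun _ => S 0) y := rfl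
      rw [hHy, hFieq, Set.indicator_of_mem hyS, hmin_eq]
      have h1 := hS0' (x - y)
      have h2 := hS0' x
      have h3 := norm_sub_le (φ (x - y)) (φ x)
      nlinarith [hSnn 2]
  have hFint : ∀ x, Integrable (Fi x) T.ν := fun x =>
    Integrable.mono' hHdom_int (hFim x) (Filter.Eventually.of_forall (hFb x))
  have hIcont : Continuous fun x => ∫ y, Fi x y ∂T.ν := by
    refine continuous_of_dominated hFim (fun x => Filter.Eventually.of_forall (hFb x))
      hHdom_int (Filter.Eventually.of_forall fun y => ?_)
    refine Continuous.add ?_ ?_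
    · exact (hφs.continuous.comp (continuous_id.sub continuous_const)).sub hφs.continuous
    · exact (hφ'.continuous.clm_apply continuous_const).mul continuous_const
  -- the tail function ψ
  haveI hfin : IsFiniteMeasure (T.ν.restrict Sset) :=
    ⟨by rw [Measure.restrict_apply_univ]; exact htail.lt_top⟩
  have htransl_cont : ∀ y : En n, Continuous fun x : En n => ‖φ (x - y)‖ := fun y =>
    (hφs.continuous.comp (continuous_id.sub continuous_const)).norm
  have htransl_cont' : ∀ x : En n, Continuous fun y : En n => ‖φ (x - y)‖ := fun x =>
    (hφs.continuous.comp (continuous_const.sub continuous_id)).norm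
  have hφ_transl_int : ∀ x : En n, Integrable (fun y => ‖φ (x - y)‖) (T.ν.restrict Sset) := by
    intro x
    refine Integrable.mono' (integrable_const (S 0)) (htransl_cont' x).aestronglyMeasurable
      (Filter.Eventually.of_forall fun y => ?_)
    rw [norm_norm]
    exact hS0' (x - y)
  set ψ : En n → ℝ := fun x => ∫ y, ‖φ (x - y)‖ ∂(T.ν.restrict Sset) with hψdef
  have hψ0 : ∀ x, 0 ≤ ψ x := fun x => integral_nonneg fun y => norm_nonneg _
  have hψcont : Continuous ψ := by
    refine continuous_of_dominated (fun x => (htransl_cont' x).aestronglyMeasurable)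
      (fun x => Filter.Eventually.of_forall fun y => ?_) (integrable_const (S 0))
      (Filter.Eventually.of_forall fun y => htransl_cont y)
    rw [norm_norm]; exact hS0' (x - y)
  have hψkey : ∫⁻ x, ENNReal.ofReal (ψ x) ∂(volume : Measure (En n))
      ≤ ENNReal.ofReal (S 0) * (volume : Measure (En n)) K * T.ν Sset := by
    have h1 : ∀ x, ENNReal.ofReal (ψ x)
        = ∫⁻ y, ENNReal.ofReal ‖φ (x - y)‖ ∂(T.ν.restrict Sset) := fun x =>
      ofReal_integral_eq_lintegral_ofReal (hφ_transl_int x)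
        (Filter.Eventually.of_forall fun y => norm_nonneg _)
    simp_rw [h1]
    rw [lintegral_lintegral_swap]
    · have h2 : ∀ y : En n, ∫⁻ x, ENNReal.ofReal ‖φ (x - y)‖ ∂(volume : Measure (En n))
          ≤ ENNReal.ofReal (S 0) * (volume : Measure (En n)) K := by
        intro y
        have h3 : (∫⁻ x, ENNReal.ofReal ‖φ (x - y)‖ ∂(volume : Measure (En n)))
            = ∫⁻ x, ENNReal.ofReal ‖φ x‖ ∂(volume : Measure (En n)) :=
          lintegral_sub_right_eq_self (fun x => ENNReal.ofReal ‖φ x‖) y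
        rw [h3]
        have h4 : ∀ x : En n, ENNReal.ofReal ‖φ x‖
            ≤ K.indicator (fun _ => ENNReal.ofReal (S 0)) x := by
          intro x
          by_cases hx : x ∈ K
          · rw [Set.indicator_of_mem hx]
            exact ENNReal.ofReal_le_ofReal (hS0' x)
          · have hx0 : φ x = 0 := image_eq_zero_of_notMem_tsupport fun h => hx (hφK h)
            simp [Set.indicator_of_notMem hx, hx0]
        calc ∫⁻ x, ENNReal.ofReal ‖φ x‖ ∂(volume : Measure (En n))
            ≤ ∫⁻ x, K.indicator (fun _ => ENNReal.ofReal (S 0)) x ∂(volume : Measure (En n)) :=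
              lintegral_mono h4
          _ = ENNReal.ofReal (S 0) * (volume : Measure (En n)) K := by
              rw [lintegral_indicator hK.isClosed.measurableSet]
              simp [mul_comm]
      calc ∫⁻ y, ∫⁻ x, ENNReal.ofReal ‖φ (x - y)‖ ∂(volume : Measure (En n)) ∂(T.ν.restrict Sset)
          ≤ ∫⁻ _, ENNReal.ofReal (S 0) * (volume : Measure (En n)) K ∂(T.ν.restrict Sset) :=
            lintegral_mono h2
        _ = ENNReal.ofReal (S 0) * (volume : Measure (En n)) K * T.ν Sset := by
            rw [lintegral_const, Measure.restrict_apply_univ]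
    · exact (ENNReal.continuous_ofReal.comp
        ((hφs.continuous.comp (continuous_fst.sub continuous_snd)).norm)).measurable.aemeasurable
  have hψfin : ENNReal.ofReal (S 0) * (volume : Measure (En n)) K * T.ν Sset < ⊤ :=
    ENNReal.mul_lt_top (ENNReal.mul_lt_top ENNReal.ofReal_lt_top hK.measure_lt_top)
      htail.lt_top
  have hψint : Integrable ψ (volume : Measure (En n)) := by
    refine ⟨hψcont.aestronglyMeasurable, ?_⟩
    rw [hasFiniteIntegral_iff_ofReal (Filter.Eventually.of_forall hψ0)]
    exact lt_of_le_of_lt hψkey hψfin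
  have hψbound : ∫ x, ψ x ∂(volume : Measure (En n)) ≤ S 0 * vK * νt := by
    rw [integral_eq_lintegral_of_nonneg_ae (Filter.Eventually.of_forall hψ0)
      hψcont.aestronglyMeasurable]
    have h1 := ENNReal.toReal_mono hψfin.ne hψkey
    refine h1.trans_eq ?_
    rw [ENNReal.toReal_mul, ENNReal.toReal_mul, ENNReal.toReal_ofReal (hSnn 0)]
  -- pointwise bound on the adjoint operator
  have hAdj : ∀ x, ‖T.adjOp φ x‖
      ≤ K1.indicator (fun _ => (‖T.b‖ + Qs + Cν + νt) * (S 0 + S 1 + S 2)) x + ψ x := by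
    intro x
    by_cases hx : x ∈ K1
    · have hA : ‖-(fderiv ℝ φ x T.b)‖ ≤ S 1 * ‖T.b‖ := by
        rw [norm_neg]
        exact ((fderiv ℝ φ x).le_opNorm T.b).trans
          (mul_le_mul_of_nonneg_right (hS1' x) (norm_nonneg _))
      have hB : ‖(1 / 2 : ℝ) * ∑ i, ∑ j, T.Q i j *
          fderiv ℝ (fun z => fderiv ℝ φ z (EuclideanSpace.single j 1)) x
            (EuclideanSpace.single i 1)‖ ≤ Qs * S 2 := by
        rw [norm_mul]
        have h1 : ‖∑ i, ∑ j, T.Q i j *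
            fderiv ℝ (fun z => fderiv ℝ φ z (EuclideanSpace.single j 1)) x
              (EuclideanSpace.single i 1)‖ ≤ Qs * S 2 := by
          refine (norm_sum_le _ _).trans ?_
          have h2 : ∀ i ∈ Finset.univ, ‖∑ j, T.Q i j *
              fderiv ℝ (fun z => fderiv ℝ φ z (EuclideanSpace.single j 1)) x
                (EuclideanSpace.single i 1)‖ ≤ ∑ j, |T.Q i j| * S 2 := by
            intro i _
            refine (norm_sum_le _ _).trans (Finset.sum_le_sum fun j _ => ?_)
            rw [norm_mul, Real.norm_eq_abs, Real.norm_eq_abs]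
            exact mul_le_mul_of_nonneg_left (hd2 i j x) (abs_nonneg _)
          refine (Finset.sum_le_sum h2).trans (le_of_eq ?_)
          rw [hQsdef, Finset.sum_mul]
          exact Finset.sum_congr rfl fun i _ => (Finset.sum_mul _ _ _).symm
        have h3 : ‖(1 / 2 : ℝ)‖ ≤ 1 := by rw [Real.norm_eq_abs]; rw [abs_le]; constructor <;> norm_num
        calc ‖(1 / 2 : ℝ)‖ * ‖∑ i, ∑ j, T.Q i j *
            fderiv ℝ (fun z => fderiv ℝ φ z (EuclideanSpace.single j 1)) x
              (EuclideanSpace.single i 1)‖ ≤ 1 * (Qs * S 2) :=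
            mul_le_mul h3 h1 (norm_nonneg _) zero_le_one
          _ = Qs * S 2 := one_mul _
      have hI : ‖∫ y, Fi x y ∂T.ν‖ ≤ (S 0 + S 2) * Cν + S 0 * νt := by
        calc ‖∫ y, Fi x y ∂T.ν‖ ≤ ∫ y, ‖Fi x y‖ ∂T.ν := norm_integral_le_integral_norm _
          _ ≤ ∫ y, Hdom y ∂T.ν := integral_mono_of_nonneg
              (Filter.Eventually.of_forall fun y => norm_nonneg _) hHdom_int
              (Filter.Eventually.of_forall (hFb x))
          _ = (S 0 + S 2) * Cν + S 0 * νt := by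
              simp only [hHdom]
              rw [integral_add (hmin.const_mul _) hind_int, integral_const_mul,
                integral_indicator_const _ hSm]
              rw [smul_eq_mul, measureReal_def, hνtdef, hCνdef]
              ring
      rw [hadj_eq x, Set.indicator_of_mem hx]
      have htot := (norm_add_le _ _).trans (add_le_add ((norm_add_le _ _).trans
        (add_le_add hA hB)) hI)
      have hψx := hψ0 x
      nlinarith [mul_nonneg (norm_nonneg T.b) (add_nonneg (hSnn 0) (hSnn 2)),
        mul_nonneg hQs0 (add_nonneg (hSnn 0) (hSnn 1)),
        mul_nonneg hCν0 (hSnn 1),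
        mul_nonneg hνt0 (add_nonneg (hSnn 1) (hSnn 2))]
    · have hxts : x ∉ tsupport φ := fun h => hx (hKK1 (hφK h))
      have hA0 : fderiv ℝ φ x = 0 := hfd0 x hxts
      have hB0 : ∀ i j : Fin n,
          fderiv ℝ (fun z => fderiv ℝ φ z (EuclideanSpace.single j 1)) x
            (EuclideanSpace.single i 1) = 0 := by
        intro i j
        rw [hfdd0 j x hxts]
        rfl
      have hFb2 : ∀ y, ‖Fi x y‖ ≤ Sset.indicator (fun y => ‖φ (x - y)‖) y := by
        intro y
        by_cases hy : ‖y‖ < 1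
        · have hyS : y ∉ Sset := by simpa [hSset] using hy
          have hxy : φ (x - y) = 0 := by
            apply image_eq_zero_of_notMem_tsupport
            intro hmem
            apply hx
            refine Metric.thickening_subset_cthickening 1 K ?_
            rw [Metric.mem_thickening_iff]
            refine ⟨x - y, hφK hmem, ?_⟩
            rw [dist_eq_norm]
            simpa using hy
          have hx0 : φ x = 0 := image_eq_zero_of_notMem_tsupport hxts
          have : Fi x y = 0 := by
            rw [hFi]; simp [hxy, hx0, hA0]
          rw [this, Set.indicator_of_notMem hyS]
          simp
        · have hyS : y ∈ Sset := by simpa [hSset] using hy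
          have hyB : y ∉ {z : En n | ‖z‖ < 1} := hy
          have hx0 : φ x = 0 := image_eq_zero_of_notMem_tsupport hxts
          have : Fi x y = φ (x - y) := by
            rw [hFi]; simp [Set.indicator_of_notMem hyB, hx0]
          rw [this, Set.indicator_of_mem hyS]
      have hcalc : ‖T.adjOp φ x‖ ≤ ψ x := by
        have heq : T.adjOp φ x = ∫ y, Fi x y ∂T.ν := by
          rw [hadj_eq x, hA0]
          simp only [ContinuousLinearMap.zero_apply, neg_zero]
          have hz : (∑ i, ∑ j, T.Q i j *
              fderiv ℝ (fun z => fderiv ℝ φ z (EuclideanSpace.single j 1)) x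
                (EuclideanSpace.single i 1)) = 0 :=
            Finset.sum_eq_zero fun i _ => Finset.sum_eq_zero fun j _ => by
              rw [hB0 i j, mul_zero]
          rw [hz]
          ring
        rw [heq]
        calc ‖∫ y, Fi x y ∂T.ν‖ ≤ ∫ y, ‖Fi x y‖ ∂T.ν := norm_integral_le_integral_norm _
          _ ≤ ∫ y, Sset.indicator (fun y => ‖φ (x - y)‖) y ∂T.ν := integral_mono_of_nonneg
              (Filter.Eventually.of_forall fun y => norm_nonneg _)
              ((integrable_indicator_iff hSm).2 (hφ_transl_int x))
              (Filter.Eventually.of_forall hFb2)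
          _ = ψ x := by rw [integral_indicator hSm]
      rw [Set.indicator_of_notMem hx]
      simpa using hcalc
  -- continuity of the adjoint operator
  have hadj_cont : Continuous (T.adjOp φ) := by
    have h1 : Continuous fun x : En n => -(fderiv ℝ φ x T.b) :=
      (hφ'.continuous.clm_apply continuous_const).neg
    have h2 : Continuous fun x : En n => (1 / 2 : ℝ) * ∑ i, ∑ j, T.Q i j *
        fderiv ℝ (fun z => fderiv ℝ φ z (EuclideanSpace.single j 1)) x
          (EuclideanSpace.single i 1) := by
      refine continuous_const.mul (continuous_finset_sum _ fun i _ =>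
        continuous_finset_sum _ fun j _ => continuous_const.mul ?_)
      have hg : ContDiff ℝ (⊤ : ℕ∞) fun z => fderiv ℝ φ z (EuclideanSpace.single j 1) :=
        hφ'.clm_apply contDiff_const
      exact ((hg.fderiv_right (m := (⊤ : ℕ∞)) (by simp)).continuous.clm_apply continuous_const)
    have : T.adjOp φ = fun x => -(fderiv ℝ φ x T.b)
        + (1 / 2) * (∑ i, ∑ j, T.Q i j *
            fderiv ℝ (fun z => fderiv ℝ φ z (EuclideanSpace.single j 1)) x
              (EuclideanSpace.single i 1))
        + ∫ y, Fi x y ∂T.ν := funext hadj_eq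
    rw [this]
    exact (h1.add h2).add hIcont
  -- the dominating function
  set G : En n → ℝ := fun x =>
    K1.indicator (fun _ => (‖T.b‖ + Qs + Cν + νt) * (S 0 + S 1 + S 2)) x + ψ x with hGdef
  have hGint : Integrable G (volume : Measure (En n)) :=
    ((integrable_indicator_iff hK1m).2 ((integrableOn_const_iff).2
      (Or.inr hK1c.measure_lt_top))).add hψint
  have hae : ∀ᵐ x ∂(volume : Measure (En n)), ‖f x * T.adjOp φ x‖ ≤ M * G x := by
    filter_upwards [hfM] with x hx
    rw [norm_mul]
    exact mul_le_mul hx (hAdj x) (norm_nonneg _) hM0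
  have hint : Integrable (fun x => f x * T.adjOp φ x) (volume : Measure (En n)) :=
    Integrable.mono' (hGint.const_mul M) (hfm.mul hadj_cont.aestronglyMeasurable) hae
  refine ⟨hint, ?_⟩
  rw [hsum]
  have h1 : |∫ x, f x * T.adjOp φ x| ≤ ∫ x, M * G x ∂(volume : Measure (En n)) := by
    rw [← Real.norm_eq_abs]
    exact norm_integral_le_of_norm_le (hGint.const_mul M) hae
  have h2 : ∫ x, M * G x ∂(volume : Measure (En n))
      = M * (vK1 * ((‖T.b‖ + Qs + Cν + νt) * (S 0 + S 1 + S 2))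
        + ∫ x, ψ x ∂(volume : Measure (En n))) := by
    rw [integral_const_mul]
    congr 1
    simp only [hGdef]
    rw [integral_add ((integrable_indicator_iff hK1m).2 ((integrableOn_const_iff).2
      (Or.inr hK1c.measure_lt_top))) hψint, integral_indicator_const _ hK1m]
    rw [smul_eq_mul, measureReal_def, hvK1def]
  rw [h2] at h1
  have h3 : M * (vK1 * ((‖T.b‖ + Qs + Cν + νt) * (S 0 + S 1 + S 2))
      + ∫ x, ψ x ∂(volume : Measure (En n)))
      ≤ M * (vK1 * ((‖T.b‖ + Qs + Cν + νt) * (S 0 + S 1 + S 2)) + S 0 * vK * νt) := by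
    have := hψbound
    nlinarith
  have h4 : M * (vK1 * ((‖T.b‖ + Qs + Cν + νt) * (S 0 + S 1 + S 2)) + S 0 * vK * νt)
      ≤ ((‖T.b‖ + Qs + Cν + νt) * vK1 + νt * vK + 1) * M * (S 0 + S 1 + S 2) := by
    nlinarith [mul_nonneg hM0 (add_nonneg (add_nonneg (hSnn 0) (hSnn 1)) (hSnn 2)),
      mul_nonneg (mul_nonneg (mul_nonneg hM0 hνt0) hvK0) (add_nonneg (hSnn 1) (hSnn 2))]
  linarith
end
end

section
/- Let ψ be the characteristic exponent of a Lévy triplet (b, Q, ν) on ℝ^n. Then for all ξ, η ∈ ℝ^n one has √|ψ(ξ + η)| ≤ √|ψ(ξ)| + √|ψ(η)|. -/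
open MeasureTheory Complex
open scoped ENNReal Topology Pointwise

noncomputable section

def qf {n : ℕ} (Q : Matrix (Fin n) (Fin n) ℝ) (ξ : En n) : ℝ := ∑ i, ∑ j, Q i j * ξ i * ξ j
def bil {n : ℕ} (Q : Matrix (Fin n) (Fin n) ℝ) (ξ η : En n) : ℝ := ∑ i, ∑ j, Q i j * ξ i * η j

lemma qf_nonneg {n : ℕ} {Q : Matrix (Fin n) (Fin n) ℝ} (hQ : Q.PosSemidef) (ξ : En n) :
    0 ≤ qf Q ξ := by
  have h := hQ.dotProduct_mulVec_nonneg (fun i => ξ i)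
  simpa [qf, dotProduct, Matrix.mulVec, Finset.mul_sum, mul_comm, mul_left_comm,
    mul_assoc] using h

lemma qf_expand {n : ℕ} {Q : Matrix (Fin n) (Fin n) ℝ} (hs : Q.IsSymm) (ξ η : En n) (t : ℝ) :
    qf Q (ξ + t • η) = qf Q ξ + 2 * bil Q ξ η * t + qf Q η * t ^ 2 := by
  have hsym : ∀ i j, Q j i = Q i j := fun i j => hs.apply i j
  have hswap : (∑ i, ∑ j, Q i j * η i * ξ j) = bil Q ξ η := by
    rw [Finset.sum_comm]
    exact Finset.sum_congr rfl fun j _ => Finset.sum_congr rfl fun i _ => by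
      rw [hsym j i]; ring
  calc qf Q (ξ + t • η)
      = ∑ i, ∑ j, (Q i j * ξ i * ξ j + (Q i j * ξ i * η j) * t
          + (Q i j * η i * ξ j) * t + (Q i j * η i * η j) * t ^ 2) := by
        refine Finset.sum_congr rfl fun i _ => Finset.sum_congr rfl fun j _ => ?_
        simp only [PiLp.add_apply, PiLp.smul_apply, smul_eq_mul]; ring
    _ = qf Q ξ + (bil Q ξ η) * t + (∑ i, ∑ j, Q i j * η i * ξ j) * t + qf Q η * t ^ 2 := by
        simp only [Finset.sum_add_distrib, Finset.sum_mul, qf, bil]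
    _ = qf Q ξ + 2 * bil Q ξ η * t + qf Q η * t ^ 2 := by rw [hswap]; ring

lemma qf_add {n : ℕ} {Q : Matrix (Fin n) (Fin n) ℝ} (hs : Q.IsSymm) (ξ η : En n) :
    qf Q (ξ + η) = qf Q ξ + 2 * bil Q ξ η + qf Q η := by
  have := qf_expand hs ξ η 1
  simpa using this

lemma bil_abs_le {n : ℕ} {Q : Matrix (Fin n) (Fin n) ℝ} (hQ : Q.PosSemidef) (hs : Q.IsSymm)
    (ξ η : En n) : |bil Q ξ η| ≤ Real.sqrt (qf Q ξ * qf Q η) := by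
  apply Real.abs_le_sqrt
  have h := discrim_le_zero (a := qf Q η) (b := 2 * bil Q ξ η) (c := qf Q ξ) fun t => by
    have := qf_nonneg hQ (ξ + t • η)
    rw [qf_expand hs ξ η t] at this
    nlinarith [this]
  rw [discrim] at h
  nlinarith [h]

lemma abs_I_mul_ofReal (t : ℝ) : ‖Complex.I * (t : ℂ)‖ = |t| := by simp

lemma abs_one_sub_expI_le (t : ℝ) :
    ‖1 - Complex.exp (Complex.I * (t : ℂ))‖ ≤ 2 * min |t| 1 := by
  rcases le_or_gt |t| 1 with h | h
  · rw [min_eq_left h, ← norm_neg, neg_sub]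
    have := Complex.norm_exp_sub_one_le (x := Complex.I * t) (by simpa using h)
    simpa using this
  · rw [min_eq_right h.le]
    have h1 : ‖Complex.exp (Complex.I * t)‖ = 1 := by
      rw [Complex.norm_exp]; simp
    calc ‖1 - Complex.exp (Complex.I * t)‖
        ≤ ‖(1:ℂ)‖ + ‖Complex.exp (Complex.I * t)‖ :=
          norm_sub_le _ _
      _ ≤ 2 * 1 := by rw [h1]; simp; norm_num

lemma abs_one_sub_expI_add_le (t : ℝ) :
    ‖1 - Complex.exp (Complex.I * (t : ℂ)) + Complex.I * t‖ ≤ 3 * t ^ 2 := by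
  rcases le_or_gt |t| 1 with h | h
  · have := Complex.norm_exp_sub_one_sub_id_le (x := Complex.I * t) (by simpa using h)
    have he : (1 : ℂ) - Complex.exp (Complex.I * t) + Complex.I * t
        = -(Complex.exp (Complex.I * t) - 1 - Complex.I * t) := by ring
    rw [he, norm_neg]
    calc ‖_‖ ≤ ‖Complex.I * (t:ℂ)‖ ^ 2 := this
      _ = t ^ 2 := by rw [abs_I_mul_ofReal]; exact _root_.sq_abs t
      _ ≤ 3 * t ^ 2 := by nlinarith [sq_nonneg t]
  · have h2 : (1:ℝ) ≤ t ^ 2 := by nlinarith [abs_nonneg t, _root_.sq_abs t]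
    have h3 : |t| ≤ t ^ 2 := by nlinarith [abs_nonneg t, _root_.sq_abs t]
    calc ‖1 - Complex.exp (Complex.I * t) + Complex.I * t‖
        ≤ ‖1 - Complex.exp (Complex.I * t)‖ + ‖Complex.I * (t:ℂ)‖ := by
          apply norm_add_le
      _ ≤ 2 * min |t| 1 + |t| := by rw [abs_I_mul_ofReal]; gcongr; exact abs_one_sub_expI_le t
      _ ≤ 2 * 1 + |t| := by gcongr; exact min_le_right _ _
      _ ≤ 3 * t ^ 2 := by nlinarith

lemma sq_abs_one_sub_expI (t : ℝ) :
    ‖1 - Complex.exp (Complex.I * (t : ℂ))‖ ^ 2 = 2 * (1 - Real.cos t) := by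
  rw [Complex.sq_norm, Complex.normSq_apply]
  have h1 : ((1 : ℂ) - Complex.exp (Complex.I * t)).re = 1 - Real.cos t := by
    simp [Complex.sub_re, mul_comm Complex.I, Complex.exp_ofReal_mul_I_re]
  have h2 : ((1 : ℂ) - Complex.exp (Complex.I * t)).im = -Real.sin t := by
    simp [Complex.sub_im, mul_comm Complex.I, Complex.exp_ofReal_mul_I_im]
  rw [h1, h2]
  nlinarith [Real.sin_sq_add_cos_sq t]

/- ======== measure part ======== -/
namespace LevySub
variable {n : ℕ}

def S (n : ℕ) : Set (En n) := {y : En n | ‖y‖ < 1}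

lemma measurableSet_S : MeasurableSet (S n) :=
  (isOpen_lt continuous_norm continuous_const).measurableSet

def fE (ξ : En n) (x : En n) : ℂ := 1 - Complex.exp (Complex.I * ((inner ℝ ξ x : ℝ) : ℂ))

def gI (ξ : En n) (x : En n) : ℂ :=
  1 - Complex.exp (Complex.I * ((inner ℝ ξ x : ℝ) : ℂ))
    + Complex.I * ((inner ℝ ξ x : ℝ) : ℂ) * ((S n).indicator (fun _ => (1 : ℂ)) x)

lemma charExp_eq (T : LevyTriplet n) (ξ : En n) :
    T.charExp ξ = -Complex.I * ((inner ℝ T.b ξ : ℝ) : ℂ) + (1/2 : ℂ) * ((qf T.Q ξ : ℝ) : ℂ)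
      + ∫ x, gI ξ x ∂T.ν := rfl

lemma continuous_theta (ξ : En n) : Continuous fun x : En n => (inner ℝ ξ x : ℝ) :=
  continuous_const.inner continuous_id

lemma continuous_fE (ξ : En n) : Continuous (fE ξ) := by
  unfold fE
  exact continuous_const.sub (Complex.continuous_exp.comp
    (continuous_const.mul (Complex.continuous_ofReal.comp (continuous_theta ξ))))

lemma aesm_gI (ξ : En n) (μ : Measure (En n)) : AEStronglyMeasurable (gI ξ) μ := by
  refine (Measurable.aestronglyMeasurable ?_)
  unfold gI
  refine ((continuous_fE ξ).measurable.add ?_)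
  refine Measurable.mul ?_ (measurable_const.indicator measurableSet_S)
  exact (Complex.measurable_ofReal.comp (continuous_theta ξ).measurable).const_mul _

lemma integrable_min (T : LevyTriplet n) : Integrable (fun x => min (‖x‖ ^ 2) 1) T.ν := by
  refine ⟨((continuous_norm.pow 2).min continuous_const).aestronglyMeasurable, ?_⟩
  rw [hasFiniteIntegral_iff_ofReal]
  · exact T.hνint
  · exact Filter.Eventually.of_forall fun x => le_min (by positivity) zero_le_one

lemma theta_abs_le (ξ x : En n) : |(inner ℝ ξ x : ℝ)| ≤ ‖ξ‖ * ‖x‖ := abs_real_inner_le_norm ξ x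

lemma norm_gI_le (ξ : En n) (x : En n) :
    ‖gI ξ x‖ ≤ (3 * ‖ξ‖ ^ 2 + 2) * min (‖x‖ ^ 2) 1 := by
  set t : ℝ := (inner ℝ ξ x : ℝ) with ht
  have habs := theta_abs_le ξ x
  have hn : (0:ℝ) ≤ ‖x‖ := norm_nonneg x
  have hxi : (0:ℝ) ≤ ‖ξ‖ := norm_nonneg ξ
  by_cases hx : x ∈ S n
  · have hx1 : ‖x‖ < 1 := hx
    have hmin : min (‖x‖ ^ 2) 1 = ‖x‖ ^ 2 := min_eq_left (by nlinarith)
    unfold gI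
    rw [Set.indicator_of_mem hx, mul_one, hmin]
    calc ‖_‖ ≤ 3 * t ^ 2 := abs_one_sub_expI_add_le t
      _ ≤ (3 * ‖ξ‖ ^ 2 + 2) * ‖x‖ ^ 2 := by nlinarith [abs_nonneg t, _root_.sq_abs t]
  · have hx1 : (1:ℝ) ≤ ‖x‖ := not_lt.mp hx
    have hmin : min (‖x‖ ^ 2) 1 = 1 := min_eq_right (by nlinarith)
    unfold gI
    rw [Set.indicator_of_notMem hx, mul_zero, add_zero, hmin]
    calc ‖_‖ ≤ 2 * min |t| 1 := abs_one_sub_expI_le t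
      _ ≤ 2 * 1 := by gcongr; exact min_le_right _ _
      _ ≤ (3 * ‖ξ‖ ^ 2 + 2) * 1 := by nlinarith

lemma norm_fE_le (ξ : En n) (x : En n) : ‖fE ξ x‖ ≤ 2 * min (‖ξ‖ * ‖x‖) 1 := by
  calc ‖_‖ ≤ 2 * min |(inner ℝ ξ x : ℝ)| 1 := abs_one_sub_expI_le _
    _ ≤ 2 * min (‖ξ‖ * ‖x‖) 1 := by
        gcongr
        exact theta_abs_le ξ x

lemma integrable_gI (T : LevyTriplet n) (ξ : En n) : Integrable (gI ξ) T.ν := by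
  refine Integrable.mono' ((integrable_min T).const_mul (3 * ‖ξ‖ ^ 2 + 2)) (aesm_gI ξ _) ?_
  exact Filter.Eventually.of_forall fun x => norm_gI_le ξ x

lemma integrable_fE_mul (T : LevyTriplet n) (ξ η : En n) :
    Integrable (fun x => fE ξ x * fE η x) T.ν := by
  refine Integrable.mono' ((integrable_min T).const_mul (4 * max (‖ξ‖ * ‖η‖) 1))
    ((continuous_fE ξ).aestronglyMeasurable.mul (continuous_fE η).aestronglyMeasurable) ?_
  refine Filter.Eventually.of_forall fun x => ?_
  rw [norm_mul]
  have h1 := norm_fE_le ξ x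
  have h2 := norm_fE_le η x
  have hn : (0:ℝ) ≤ ‖x‖ := norm_nonneg x
  have hxi : (0:ℝ) ≤ ‖ξ‖ := norm_nonneg ξ
  have het : (0:ℝ) ≤ ‖η‖ := norm_nonneg η
  have key : min (‖ξ‖ * ‖x‖) 1 * min (‖η‖ * ‖x‖) 1 ≤ max (‖ξ‖ * ‖η‖) 1 * min (‖x‖ ^ 2) 1 := by
    rcases le_or_gt ‖x‖ 1 with hx | hx
    · have hmin : min (‖x‖ ^ 2) 1 = ‖x‖ ^ 2 := min_eq_left (by nlinarith)
      rw [hmin]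
      calc min (‖ξ‖ * ‖x‖) 1 * min (‖η‖ * ‖x‖) 1 ≤ (‖ξ‖ * ‖x‖) * (‖η‖ * ‖x‖) := by
            apply mul_le_mul (min_le_left _ _) (min_le_left _ _) (le_min (by positivity) zero_le_one) (by positivity)
        _ = (‖ξ‖ * ‖η‖) * ‖x‖ ^ 2 := by ring
        _ ≤ max (‖ξ‖ * ‖η‖) 1 * ‖x‖ ^ 2 := by gcongr; exact le_max_left _ _
    · have hmin : min (‖x‖ ^ 2) 1 = 1 := min_eq_right (by nlinarith)
      rw [hmin, mul_one]
      calc min (‖ξ‖ * ‖x‖) 1 * min (‖η‖ * ‖x‖) 1 ≤ 1 * 1 := by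
            apply mul_le_mul (min_le_right _ _) (min_le_right _ _) (le_min (by positivity) zero_le_one) zero_le_one
        _ ≤ max (‖ξ‖ * ‖η‖) 1 := by rw [one_mul]; exact le_max_right _ _
  calc ‖fE ξ x‖ * ‖fE η x‖ ≤ (2 * min (‖ξ‖ * ‖x‖) 1) * (2 * min (‖η‖ * ‖x‖) 1) := by
        apply mul_le_mul h1 h2 (norm_nonneg _) (by positivity)
    _ = 4 * (min (‖ξ‖ * ‖x‖) 1 * min (‖η‖ * ‖x‖) 1) := by ring
    _ ≤ 4 * (max (‖ξ‖ * ‖η‖) 1 * min (‖x‖ ^ 2) 1) := by gcongr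
    _ = 4 * max (‖ξ‖ * ‖η‖) 1 * min (‖x‖ ^ 2) 1 := by ring

lemma one_sub_cos_eq (ξ x : En n) :
    1 - Real.cos (inner ℝ ξ x : ℝ) = ‖fE ξ x‖ ^ 2 / 2 := by
  unfold fE
  rw [sq_abs_one_sub_expI]
  ring

lemma integrable_one_sub_cos (T : LevyTriplet n) (ξ : En n) :
    Integrable (fun x => 1 - Real.cos (inner ℝ ξ x : ℝ)) T.ν := by
  refine Integrable.mono' ((integrable_min T).const_mul (2 * max (‖ξ‖ ^ 2) 1))
    ((continuous_const.sub ((Real.continuous_cos.comp (continuous_theta ξ)))).aestronglyMeasurable) ?_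
  refine Filter.Eventually.of_forall fun x => ?_
  set t : ℝ := (inner ℝ ξ x : ℝ)
  have h0 : 0 ≤ 1 - Real.cos t := by nlinarith [Real.cos_le_one t]
  rw [Real.norm_of_nonneg h0]
  have h1 : ‖fE ξ x‖ ≤ 2 * min (‖ξ‖ * ‖x‖) 1 := norm_fE_le ξ x
  have h2 := one_sub_cos_eq ξ x
  have hfn : 0 ≤ ‖fE ξ x‖ := norm_nonneg _
  have hn : (0:ℝ) ≤ ‖x‖ := norm_nonneg x
  have hxi : (0:ℝ) ≤ ‖ξ‖ := norm_nonneg ξ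
  have key : min (‖ξ‖ * ‖x‖) 1 ^ 2 ≤ max (‖ξ‖ ^ 2) 1 * min (‖x‖ ^ 2) 1 := by
    rcases le_or_gt (‖ξ‖ * ‖x‖) 1 with hx | hx
    · rw [min_eq_left hx]
      rcases le_or_gt ‖x‖ 1 with hy | hy
      · rw [min_eq_left (by nlinarith)]
        calc (‖ξ‖ * ‖x‖) ^ 2 = ‖ξ‖ ^ 2 * ‖x‖ ^ 2 := by ring
          _ ≤ max (‖ξ‖ ^ 2) 1 * ‖x‖ ^ 2 := by gcongr; exact le_max_left _ _
      · rw [min_eq_right (by nlinarith)]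
        nlinarith [le_max_right (‖ξ‖ ^ 2) 1, mul_nonneg hxi hn, hx]
    · rw [min_eq_right hx.le]
      have : (1:ℝ) ≤ max (‖ξ‖ ^ 2) 1 * min (‖x‖ ^ 2) 1 := by
        rcases le_or_gt ‖x‖ 1 with hy | hy
        · rw [min_eq_left (by nlinarith)]
          have hξ1 : 1 ≤ ‖ξ‖ ^ 2 * ‖x‖ ^ 2 := by nlinarith
          calc (1:ℝ) ≤ ‖ξ‖ ^ 2 * ‖x‖ ^ 2 := hξ1
            _ ≤ max (‖ξ‖ ^ 2) 1 * ‖x‖ ^ 2 := by gcongr; exact le_max_left _ _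
        · rw [min_eq_right (by nlinarith)]
          simpa using le_max_right (‖ξ‖ ^ 2) 1
      nlinarith
  nlinarith [h2, sq_nonneg (min (‖ξ‖ * ‖x‖) 1)]

lemma re_gI (ξ x : En n) : (gI ξ x).re = 1 - Real.cos (inner ℝ ξ x : ℝ) := by
  unfold gI
  set t : ℝ := (inner ℝ ξ x : ℝ)
  by_cases hx : x ∈ S n
  · rw [Set.indicator_of_mem hx]
    simp [Complex.add_re, Complex.sub_re, mul_comm Complex.I, Complex.exp_ofReal_mul_I_re]
  · rw [Set.indicator_of_notMem hx]
    simp [Complex.add_re, Complex.sub_re, mul_comm Complex.I, Complex.exp_ofReal_mul_I_re]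

lemma re_charExp (T : LevyTriplet n) (ξ : En n) :
    (T.charExp ξ).re = qf T.Q ξ / 2 + ∫ x, (1 - Real.cos (inner ℝ ξ x : ℝ)) ∂T.ν := by
  rw [charExp_eq]
  rw [Complex.add_re, Complex.add_re]
  have h1 : (-Complex.I * ((inner ℝ T.b ξ : ℝ) : ℂ)).re = 0 := by simp
  have h2 : ((1/2 : ℂ) * ((qf T.Q ξ : ℝ) : ℂ)).re = qf T.Q ξ / 2 := by
    simp; ring
  have h3 : (∫ x, gI ξ x ∂T.ν).re = ∫ x, (1 - Real.cos (inner ℝ ξ x : ℝ)) ∂T.ν := by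
    have h := integral_re (integrable_gI T ξ)
    simp only [RCLike.re_to_complex] at h
    rw [← h]
    exact integral_congr_ae (Filter.Eventually.of_forall fun x => re_gI ξ x)
  rw [h1, h2, h3]; ring

lemma gI_add (ξ η x : En n) : gI (ξ + η) x = gI ξ x + gI η x - fE ξ x * fE η x := by
  unfold gI fE
  have hth : (inner ℝ (ξ + η) x : ℝ) = (inner ℝ ξ x : ℝ) + (inner ℝ η x : ℝ) := inner_add_left ξ η x
  rw [hth]
  push_cast
  rw [mul_add, Complex.exp_add]
  ring

lemma charExp_add_sub (T : LevyTriplet n) (ξ η : En n) :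
    T.charExp (ξ + η) - T.charExp ξ - T.charExp η
      = ((bil T.Q ξ η : ℝ) : ℂ) - ∫ x, fE ξ x * fE η x ∂T.ν := by
  rw [charExp_eq, charExp_eq, charExp_eq]
  have hb : (inner ℝ T.b (ξ + η) : ℝ) = (inner ℝ T.b ξ : ℝ) + (inner ℝ T.b η : ℝ) :=
    inner_add_right T.b ξ η
  have hq : qf T.Q (ξ + η) = qf T.Q ξ + 2 * bil T.Q ξ η + qf T.Q η := qf_add T.hQsymm ξ η
  have hint : (∫ x, gI (ξ + η) x ∂T.ν)
      = (∫ x, gI ξ x ∂T.ν) + (∫ x, gI η x ∂T.ν) - ∫ x, fE ξ x * fE η x ∂T.ν := by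
    calc (∫ x, gI (ξ + η) x ∂T.ν)
        = ∫ x, (gI ξ x + gI η x - fE ξ x * fE η x) ∂T.ν :=
          integral_congr_ae (Filter.Eventually.of_forall fun x => gI_add ξ η x)
      _ = (∫ x, (gI ξ x + gI η x) ∂T.ν) - ∫ x, fE ξ x * fE η x ∂T.ν :=
          integral_sub ((integrable_gI T ξ).add (integrable_gI T η)) (integrable_fE_mul T ξ η)
      _ = (∫ x, gI ξ x ∂T.ν) + (∫ x, gI η x ∂T.ν) - ∫ x, fE ξ x * fE η x ∂T.ν := by
          rw [integral_add (integrable_gI T ξ) (integrable_gI T η)]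
  rw [hb, hq, hint]
  push_cast
  ring

end LevySub

namespace LevySub
variable {n : ℕ}

lemma memL2_abs_fE (T : LevyTriplet n) (ξ : En n) :
    MemLp (fun x => ‖fE ξ x‖) (ENNReal.ofReal 2) T.ν := by
  rw [show ENNReal.ofReal (2:ℝ) = 2 by norm_num]
  refine (memLp_two_iff_integrable_sq ((continuous_fE ξ).norm).aestronglyMeasurable).mpr ?_
  have he : (fun x => ‖fE ξ x‖ ^ 2) = fun x => 2 * (1 - Real.cos (inner ℝ ξ x : ℝ)) :=
    funext fun x => by rw [one_sub_cos_eq]; ring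
  rw [he]
  exact (integrable_one_sub_cos T ξ).const_mul 2

lemma abs_integral_fE_mul_le (T : LevyTriplet n) (ξ η : En n) :
    ‖∫ x, fE ξ x * fE η x ∂T.ν‖ ≤
      2 * Real.sqrt (∫ x, (1 - Real.cos (inner ℝ ξ x : ℝ)) ∂T.ν)
        * Real.sqrt (∫ x, (1 - Real.cos (inner ℝ η x : ℝ)) ∂T.ν) := by
  have hpq : Real.HolderConjugate 2 2 := Real.HolderConjugate.two_two
  have hH := integral_mul_le_Lp_mul_Lq_of_nonneg hpq
    (Filter.Eventually.of_forall fun x => norm_nonneg (fE ξ x))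
    (Filter.Eventually.of_forall fun x => norm_nonneg (fE η x))
    (memL2_abs_fE T ξ) (memL2_abs_fE T η)
  have hsq : ∀ ζ : En n, (∫ x, ‖fE ζ x‖ ^ (2:ℝ) ∂T.ν) ^ (1/(2:ℝ))
      = Real.sqrt 2 * Real.sqrt (∫ x, (1 - Real.cos (inner ℝ ζ x : ℝ)) ∂T.ν) := by
    intro ζ
    have h1 : (fun x => ‖fE ζ x‖ ^ (2:ℝ)) = fun x => 2 * (1 - Real.cos (inner ℝ ζ x : ℝ)) := by
      funext x
      rw [show (2:ℝ) = ((2:ℕ):ℝ) by norm_num, Real.rpow_natCast, one_sub_cos_eq]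
      ring
    rw [h1, integral_const_mul, ← Real.sqrt_eq_rpow,
      Real.sqrt_mul (by norm_num : (0:ℝ) ≤ 2)]
  calc ‖∫ x, fE ξ x * fE η x ∂T.ν‖ ≤ ∫ x, ‖fE ξ x * fE η x‖ ∂T.ν :=
        norm_integral_le_integral_norm _
    _ = ∫ x, ‖fE ξ x‖ * ‖fE η x‖ ∂T.ν := by simp only [norm_mul]
    _ ≤ (∫ x, ‖fE ξ x‖ ^ (2:ℝ) ∂T.ν) ^ (1/(2:ℝ)) * (∫ x, ‖fE η x‖ ^ (2:ℝ) ∂T.ν) ^ (1/(2:ℝ)) := hH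
    _ = 2 * Real.sqrt (∫ x, (1 - Real.cos (inner ℝ ξ x : ℝ)) ∂T.ν)
        * Real.sqrt (∫ x, (1 - Real.cos (inner ℝ η x : ℝ)) ∂T.ν) := by
        rw [hsq ξ, hsq η]
        have h2 : Real.sqrt 2 * Real.sqrt 2 = 2 := Real.mul_self_sqrt (by norm_num)
        linear_combination (Real.sqrt (∫ x, (1 - Real.cos (inner ℝ ξ x : ℝ)) ∂T.ν)
          * Real.sqrt (∫ x, (1 - Real.cos (inner ℝ η x : ℝ)) ∂T.ν)) * h2

end LevySub

lemma cs2 (a b c d : ℝ) (ha : 0 ≤ a) (hb : 0 ≤ b) (hc : 0 ≤ c) (hd : 0 ≤ d) :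
    Real.sqrt (a * c) + Real.sqrt (b * d) ≤ Real.sqrt ((a + b) * (c + d)) := by
  have h1 : Real.sqrt (a*c) + Real.sqrt (b*d)
      = Real.sqrt ((Real.sqrt (a*c) + Real.sqrt (b*d)) ^ 2) := by
    rw [Real.sqrt_sq (by positivity)]
  rw [h1]
  apply Real.sqrt_le_sqrt
  have e1 : Real.sqrt (a*c) ^ 2 = a * c := Real.sq_sqrt (by positivity)
  have e2 : Real.sqrt (b*d) ^ 2 = b * d := Real.sq_sqrt (by positivity)
  have e3 : Real.sqrt (a*c) * Real.sqrt (b*d) = Real.sqrt (a*d) * Real.sqrt (b*c) := by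
    rw [← Real.sqrt_mul (by positivity), ← Real.sqrt_mul (by positivity)]
    ring_nf
  have e4 : Real.sqrt (a*d) ^ 2 = a * d := Real.sq_sqrt (by positivity)
  have e5 : Real.sqrt (b*c) ^ 2 = b * c := Real.sq_sqrt (by positivity)
  nlinarith [sq_nonneg (Real.sqrt (a*d) - Real.sqrt (b*c)), e1, e2, e3, e4, e5]


open LevySub

/-- Subadditivity of `√|ψ|`. -/
theorem statement1 {n : ℕ} (hn : 0 < n) (T : LevyTriplet n) (ξ η : En n) :
    Real.sqrt ‖T.charExp (ξ + η)‖ ≤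
      Real.sqrt ‖T.charExp ξ‖ + Real.sqrt ‖T.charExp η‖ := by
  set A := ‖T.charExp ξ‖ with hAdef
  set B := ‖T.charExp η‖ with hBdef
  have hA0 : 0 ≤ A := norm_nonneg _
  have hB0 : 0 ≤ B := norm_nonneg _
  set u := ∫ x, (1 - Real.cos (inner ℝ ξ x : ℝ)) ∂T.ν with hu_def
  set v := ∫ x, (1 - Real.cos (inner ℝ η x : ℝ)) ∂T.ν with hv_def
  have hcos : ∀ ζ x : En n, 0 ≤ 1 - Real.cos (inner ℝ ζ x : ℝ) := fun ζ x => by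
    nlinarith [Real.cos_le_one (inner ℝ ζ x : ℝ)]
  have hu0 : 0 ≤ u := integral_nonneg fun x => hcos ξ x
  have hv0 : 0 ≤ v := integral_nonneg fun x => hcos η x
  have hqξ : 0 ≤ qf T.Q ξ := qf_nonneg T.hQpos ξ
  have hqη : 0 ≤ qf T.Q η := qf_nonneg T.hQpos η
  set p := qf T.Q ξ / 2 + u with hp_def
  set q := qf T.Q η / 2 + v with hq_def
  have hp0 : 0 ≤ p := by positivity
  have hq0 : 0 ≤ q := by positivity
  have hpA : p ≤ A := by
    rw [hp_def, ← re_charExp T ξ]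
    exact Complex.re_le_norm _
  have hqB : q ≤ B := by
    rw [hq_def, ← re_charExp T η]
    exact Complex.re_le_norm _
  -- difference bound
  have hdiff : ‖T.charExp (ξ + η) - T.charExp ξ - T.charExp η‖
      ≤ Real.sqrt (qf T.Q ξ * qf T.Q η) + 2 * Real.sqrt u * Real.sqrt v := by
    rw [charExp_add_sub]
    calc ‖((bil T.Q ξ η : ℝ) : ℂ) - ∫ x, fE ξ x * fE η x ∂T.ν‖
        ≤ ‖((bil T.Q ξ η : ℝ) : ℂ)‖
          + ‖∫ x, fE ξ x * fE η x ∂T.ν‖ := norm_sub_le _ _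
      _ ≤ Real.sqrt (qf T.Q ξ * qf T.Q η) + 2 * Real.sqrt u * Real.sqrt v := by
          gcongr
          · rw [Complex.norm_real, Real.norm_eq_abs]
            exact bil_abs_le T.hQpos T.hQsymm ξ η
          · exact abs_integral_fE_mul_le T ξ η
  -- combine with cs2
  have hcomb : Real.sqrt (qf T.Q ξ * qf T.Q η) + 2 * Real.sqrt u * Real.sqrt v
      ≤ 2 * Real.sqrt (p * q) := by
    have hc := cs2 (qf T.Q ξ / 2) u (qf T.Q η / 2) v (by positivity) hu0 (by positivity) hv0
    have h4 : Real.sqrt (qf T.Q ξ / 2 * (qf T.Q η / 2))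
        = Real.sqrt (qf T.Q ξ * qf T.Q η) / 2 := by
      rw [show qf T.Q ξ / 2 * (qf T.Q η / 2) = (qf T.Q ξ * qf T.Q η) * ((1/2) * (1/2)) by ring,
        Real.sqrt_mul (by positivity), Real.sqrt_mul_self (by norm_num : (0:ℝ) ≤ 1/2)]
      ring
    have h5 : Real.sqrt u * Real.sqrt v = Real.sqrt (u * v) := (Real.sqrt_mul hu0 v).symm
    rw [h4] at hc
    rw [mul_assoc, h5]
    rw [← hp_def, ← hq_def] at hc
    linarith [hc]
  have hsqpq : Real.sqrt (p * q) ≤ Real.sqrt A * Real.sqrt B := by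
    rw [Real.sqrt_mul hp0]
    exact mul_le_mul (Real.sqrt_le_sqrt hpA) (Real.sqrt_le_sqrt hqB) (Real.sqrt_nonneg _)
      (Real.sqrt_nonneg _)
  have key : ‖T.charExp (ξ + η)‖ ≤ (Real.sqrt A + Real.sqrt B) ^ 2 := by
    set d := T.charExp (ξ + η) - T.charExp ξ - T.charExp η with hd_def
    have h6 : T.charExp (ξ + η) = T.charExp ξ + T.charExp η + d := by rw [hd_def]; ring
    calc ‖T.charExp (ξ + η)‖
        ≤ A + B + ‖d‖ := by
          rw [h6]
          refine le_trans (norm_add_le _ _) ?_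
          gcongr
          exact norm_add_le _ _
      _ ≤ A + B + 2 * Real.sqrt (p * q) := by gcongr; exact le_trans hdiff hcomb
      _ ≤ A + B + 2 * (Real.sqrt A * Real.sqrt B) := by gcongr
      _ = (Real.sqrt A + Real.sqrt B) ^ 2 := by
          rw [add_sq, Real.sq_sqrt hA0, Real.sq_sqrt hB0]
          ring
  calc Real.sqrt (‖T.charExp (ξ + η)‖)
      ≤ Real.sqrt ((Real.sqrt A + Real.sqrt B) ^ 2) := Real.sqrt_le_sqrt key
    _ = Real.sqrt A + Real.sqrt B := Real.sqrt_sq (by positivity)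
end
end

section
/- Let ψ be the characteristic exponent of a Lévy triplet (b, Q, ν) on ℝ^n. Then for all ξ, η ∈ ℝ^n one has |ψ(ξ) + conj(ψ(η)) − ψ(ξ − η)|² ≤ 4·|ψ(ξ)|·|ψ(η)|, where conj denotes complex conjugation. -/
open MeasureTheory Complex
open scoped ENNReal Topology Pointwise

noncomputable section

namespace Statement2Aux


lemma aux_le_two (θ : ℝ) : ‖1 - Complex.exp (Complex.I * θ)‖ ≤ 2 := by
  calc ‖1 - Complex.exp (Complex.I * θ)‖
      ≤ ‖1‖ + ‖Complex.exp (Complex.I * θ)‖ :=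
        norm_sub_le _ _
    _ ≤ 2 := by rw [norm_one, Complex.norm_exp]; norm_num

lemma aux_le_abs (θ : ℝ) : ‖1 - Complex.exp (Complex.I * θ)‖ ≤ |θ| := by
  have h : ‖1 - Complex.exp (Complex.I * θ)‖ ^ 2 = 2 - 2 * Real.cos θ := by
    rw [Complex.sq_norm, Complex.normSq_apply]
    rw [mul_comm Complex.I, Complex.exp_mul_I]
    simp [Complex.cos_ofReal_re, Complex.sin_ofReal_re]
    ring_nf
    nlinarith [Real.sin_sq_add_cos_sq θ]
  nlinarith [Real.one_sub_sq_div_two_le_cos (x := θ),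
    norm_nonneg (1 - Complex.exp (Complex.I * θ)), abs_nonneg θ, _root_.sq_abs θ]

lemma aux_sub_id (θ : ℝ) :
    ‖1 - Complex.exp (Complex.I * θ) + Complex.I * θ‖ ≤ 3 * θ ^ 2 := by
  rcases le_or_gt |θ| 1 with h | h
  · have h2 : ‖Complex.exp (Complex.I * θ) - 1 - Complex.I * θ‖ ≤ θ ^ 2 := by
      have := Complex.norm_exp_sub_one_sub_id_le (x := Complex.I * θ) (by simpa using h)
      simpa [_root_.sq_abs] using this
    have h3 : (1 : ℂ) - Complex.exp (Complex.I * θ) + Complex.I * θ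
        = -(Complex.exp (Complex.I * θ) - 1 - Complex.I * θ) := by ring
    rw [h3, norm_neg]
    nlinarith
  · calc ‖1 - Complex.exp (Complex.I * θ) + Complex.I * θ‖
        ≤ ‖1 - Complex.exp (Complex.I * θ)‖ + ‖Complex.I * θ‖ :=
          norm_add_le _ _
      _ ≤ 2 + |θ| := by
          refine add_le_add (aux_le_two θ) ?_
          rw [norm_mul, Complex.norm_I, one_mul, Complex.norm_real, Real.norm_eq_abs]
      _ ≤ 3 * θ ^ 2 := by nlinarith [_root_.sq_abs θ]

variable {n : ℕ}

/-- `g ξ x = 1 - e^{i⟨ξ,x⟩}`. -/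
def g (ξ x : En n) : ℂ := 1 - Complex.exp (Complex.I * ((inner ℝ ξ x : ℝ) : ℂ))

/-- The integrand of the characteristic exponent. -/
def F (ξ x : En n) : ℂ :=
  1 - Complex.exp (Complex.I * ((inner ℝ ξ x : ℝ) : ℂ))
    + Complex.I * ((inner ℝ ξ x : ℝ) : ℂ)
      * ({y : En n | ‖y‖ < 1}.indicator (fun _ => (1 : ℂ)) x)

lemma continuous_inner' (ξ : En n) : Continuous fun x : En n => (inner ℝ ξ x : ℝ) :=
  continuous_const.inner continuous_id

lemma g_cont (ξ : En n) : Continuous (g ξ) := by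
  unfold g
  exact continuous_const.sub (Complex.continuous_exp.comp
    (continuous_const.mul (Complex.continuous_ofReal.comp (continuous_inner' ξ))))

lemma meas_ball : MeasurableSet {y : En n | ‖y‖ < 1} :=
  (isOpen_lt continuous_norm continuous_const).measurableSet

lemma F_eq (ξ : En n) : F ξ = fun x => g ξ x
    + ({y : En n | ‖y‖ < 1}.indicator (fun x => Complex.I * ((inner ℝ ξ x : ℝ) : ℂ)) x) := by
  funext x
  unfold F g
  by_cases hx : x ∈ {y : En n | ‖y‖ < 1}
  · simp [Set.indicator_of_mem hx]
  · simp [Set.indicator_of_notMem hx]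

lemma F_sm (ξ : En n) : StronglyMeasurable (F ξ) := by
  rw [F_eq]
  exact (g_cont ξ).stronglyMeasurable.add
    ((continuous_const.mul ((Complex.continuous_ofReal.comp
      (continuous_inner' ξ)))).stronglyMeasurable.indicator meas_ball)

lemma norm_g_le_two (ξ x : En n) : ‖g ξ x‖ ≤ 2 := aux_le_two _

lemma norm_g_le (ξ x : En n) : ‖g ξ x‖ ≤ ‖ξ‖ * ‖x‖ :=
  (aux_le_abs _).trans (abs_real_inner_le_norm ξ x)

lemma norm_F_le (ξ x : En n) : ‖F ξ x‖ ≤ (3 * ‖ξ‖ ^ 2 + 2) * min (‖x‖ ^ 2) 1 := by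
  have hθ : |(inner ℝ ξ x : ℝ)| ≤ ‖ξ‖ * ‖x‖ := abs_real_inner_le_norm ξ x
  by_cases hx : x ∈ {y : En n | ‖y‖ < 1}
  · have hx1 : ‖x‖ < 1 := hx
    have hmin : min (‖x‖ ^ 2) 1 = ‖x‖ ^ 2 :=
      min_eq_left (by nlinarith [norm_nonneg x])
    have h1 : ‖F ξ x‖ ≤ 3 * (inner ℝ ξ x : ℝ) ^ 2 := by
      unfold F
      rw [Set.indicator_of_mem hx, mul_one]
      exact aux_sub_id _
    rw [hmin]
    nlinarith [norm_nonneg x, norm_nonneg ξ, _root_.sq_abs (inner ℝ ξ x : ℝ),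
      abs_nonneg (inner ℝ ξ x : ℝ), mul_nonneg (norm_nonneg ξ) (norm_nonneg x)]
  · have hx1 : (1 : ℝ) ≤ ‖x‖ := not_lt.1 hx
    have hmin : min (‖x‖ ^ 2) 1 = 1 := min_eq_right (by nlinarith)
    have h1 : ‖F ξ x‖ ≤ 2 := by
      unfold F
      rw [Set.indicator_of_notMem hx, mul_zero, add_zero]
      exact aux_le_two _
    rw [hmin]
    nlinarith [norm_nonneg ξ, sq_nonneg (‖ξ‖)]

lemma norm_gg_le (ξ η x : En n) :
    ‖g ξ x‖ * ‖g η x‖ ≤ (‖ξ‖ * ‖η‖ + 4) * min (‖x‖ ^ 2) 1 := by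
  rcases le_or_gt (‖x‖) 1 with h | h
  · have hmin : min (‖x‖ ^ 2) 1 = ‖x‖ ^ 2 := min_eq_left (by nlinarith [norm_nonneg x])
    rw [hmin]
    nlinarith [norm_g_le ξ x, norm_g_le η x, norm_nonneg (g ξ x), norm_nonneg (g η x),
      norm_nonneg ξ, norm_nonneg η, norm_nonneg x, mul_nonneg (norm_nonneg η) (norm_nonneg x)]
  · have hmin : min (‖x‖ ^ 2) 1 = 1 := min_eq_right (by nlinarith)
    rw [hmin]
    nlinarith [norm_g_le_two ξ x, norm_g_le_two η x, norm_nonneg (g ξ x), norm_nonneg (g η x),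
      mul_nonneg (norm_nonneg ξ) (norm_nonneg η)]


variable (T : LevyTriplet n)

lemma min_int : Integrable (fun x : En n => min (‖x‖ ^ 2) 1) T.ν := by
  refine ⟨((continuous_norm.pow 2).min continuous_const).aestronglyMeasurable, ?_⟩
  rw [HasFiniteIntegral]
  have : ∀ x : En n, ‖min (‖x‖ ^ 2) 1‖ₑ = ENNReal.ofReal (min (‖x‖ ^ 2) 1) := by
    intro x
    rw [← Real.enorm_eq_ofReal (le_min (sq_nonneg _) one_pos.le)]
  simpa only [this] using T.hνint

lemma F_int (ξ : En n) : Integrable (F ξ) T.ν := by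
  refine Integrable.mono' ((min_int T).const_mul (3 * ‖ξ‖ ^ 2 + 2))
    (F_sm ξ).aestronglyMeasurable (ae_of_all _ fun x => ?_)
  exact norm_F_le ξ x

lemma gg_int (ξ η : En n) : Integrable (fun x => ‖g ξ x‖ * ‖g η x‖) T.ν := by
  refine Integrable.mono' ((min_int T).const_mul (‖ξ‖ * ‖η‖ + 4))
    (((g_cont ξ).norm.mul (g_cont η).norm).aestronglyMeasurable) (ae_of_all _ fun x => ?_)
  rw [Real.norm_eq_abs, _root_.abs_of_nonneg (mul_nonneg (norm_nonneg _) (norm_nonneg _))]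
  exact norm_gg_le ξ η x

lemma g2_int (ξ : En n) : Integrable (fun x => ‖g ξ x‖ ^ 2) T.ν := by
  have := gg_int T ξ ξ
  simpa [← sq] using this

lemma gconj_int (ξ η : En n) :
    Integrable (fun x => g ξ x * (starRingEnd ℂ) (g η x)) T.ν := by
  refine Integrable.mono' (gg_int T ξ η)
    (((g_cont ξ).mul (Complex.continuous_conj.comp (g_cont η))).aestronglyMeasurable)
    (ae_of_all _ fun x => ?_)
  rw [norm_mul, RCLike.norm_conj]

lemma Fconj_int (η : En n) : Integrable (fun x => (starRingEnd ℂ) (F η x)) T.ν := by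
  refine Integrable.mono' ((min_int T).const_mul (3 * ‖η‖ ^ 2 + 2))
    ((Complex.continuous_conj.comp_stronglyMeasurable (F_sm η)).aestronglyMeasurable)
    (ae_of_all _ fun x => ?_)
  rw [RCLike.norm_conj]
  exact norm_F_le η x

lemma cross_sum (Q : Matrix (Fin n) (Fin n) ℝ) (hs : Q.IsSymm) (u v : Fin n → ℝ) :
    ∑ i, ∑ j, Q i j * v i * u j = ∑ i, ∑ j, Q i j * u i * v j := by
  rw [Finset.sum_comm]
  exact Finset.sum_congr rfl fun i _ => Finset.sum_congr rfl fun j _ => by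
    rw [hs.apply i j]; ring

lemma q_sub (Q : Matrix (Fin n) (Fin n) ℝ) (hs : Q.IsSymm) (ξ η : En n) :
    ∑ i, ∑ j, Q i j * (ξ - η) i * (ξ - η) j
      = (∑ i, ∑ j, Q i j * ξ i * ξ j) - 2 * (∑ i, ∑ j, Q i j * ξ i * η j)
        + (∑ i, ∑ j, Q i j * η i * η j) := by
  have expand : ∀ i j : Fin n, Q i j * (ξ - η) i * (ξ - η) j
      = Q i j * ξ i * ξ j - Q i j * ξ i * η j - Q i j * η i * ξ j + Q i j * η i * η j := by
    intro i j; simp only [PiLp.sub_apply]; ring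
  simp only [expand, Finset.sum_add_distrib, Finset.sum_sub_distrib,
    cross_sum Q hs (fun i => ξ i) (fun i => η i)]
  ring

lemma q_add_smul (Q : Matrix (Fin n) (Fin n) ℝ) (hs : Q.IsSymm) (u v : Fin n → ℝ) (t : ℝ) :
    ∑ i, ∑ j, Q i j * (u i + t * v i) * (u j + t * v j)
      = (∑ i, ∑ j, Q i j * v i * v j) * (t * t)
        + (2 * ∑ i, ∑ j, Q i j * u i * v j) * t
        + (∑ i, ∑ j, Q i j * u i * u j) := by
  have expand : ∀ i j : Fin n, Q i j * (u i + t * v i) * (u j + t * v j)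
      = Q i j * u i * u j + t * (Q i j * u i * v j) + t * (Q i j * v i * u j)
        + (t * t) * (Q i j * v i * v j) := by
    intro i j; ring
  simp only [expand, Finset.sum_add_distrib, ← Finset.mul_sum, cross_sum Q hs u v]
  ring

lemma q_pos (u : Fin n → ℝ) : 0 ≤ ∑ i, ∑ j, T.Q i j * u i * u j := by
  have h := T.hQpos.dotProduct_mulVec_nonneg u
  have heq : dotProduct (star u) (T.Q.mulVec u) = ∑ i, ∑ j, T.Q i j * u i * u j := by
    simp only [star_trivial, dotProduct, Matrix.mulVec, Finset.mul_sum]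
    exact Finset.sum_congr rfl fun i _ => Finset.sum_congr rfl fun j _ => by ring
  rwa [heq] at h

lemma q_cs (ξ η : En n) :
    (∑ i, ∑ j, T.Q i j * ξ i * η j) ^ 2
      ≤ (∑ i, ∑ j, T.Q i j * ξ i * ξ j) * (∑ i, ∑ j, T.Q i j * η i * η j) := by
  have h : ∀ t : ℝ, 0 ≤ (∑ i, ∑ j, T.Q i j * η i * η j) * (t * t)
      + (2 * ∑ i, ∑ j, T.Q i j * ξ i * η j) * t + (∑ i, ∑ j, T.Q i j * ξ i * ξ j) := by
    intro t
    rw [← q_add_smul T.Q T.hQsymm (fun i => ξ i) (fun i => η i) t]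
    exact q_pos T _
  have hd := discrim_le_zero h
  rw [discrim] at hd
  nlinarith

lemma exp_conj' (b : ℝ) : (starRingEnd ℂ) (Complex.exp (Complex.I * b))
    = Complex.exp (-(Complex.I * b)) := by
  rw [← Complex.exp_conj, map_mul, Complex.conj_I, Complex.conj_ofReal, neg_mul]

lemma F_combine (ξ η x : En n) :
    F ξ x + (starRingEnd ℂ) (F η x) - F (ξ - η) x
      = g ξ x * (starRingEnd ℂ) (g η x) := by
  have hab : ((inner ℝ (ξ - η) x : ℝ) : ℂ) = ((inner ℝ ξ x : ℝ) : ℂ) - ((inner ℝ η x : ℝ) : ℂ) := by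
    rw [inner_sub_left]; push_cast; ring
  simp only [F, g]
  set a : ℂ := ((inner ℝ ξ x : ℝ) : ℂ)
  set b : ℂ := ((inner ℝ η x : ℝ) : ℂ)
  set χ : ℂ := {y : En n | ‖y‖ < 1}.indicator (fun _ => (1 : ℂ)) x with hχ
  have hχconj : (starRingEnd ℂ) χ = χ := by
    rw [hχ]; unfold Set.indicator; split <;> simp
  rw [hab]
  rw [map_add, map_sub, map_one, map_mul, map_mul, Complex.conj_I, Complex.conj_ofReal,
    hχconj, exp_conj']
  have hsplit : Complex.exp (Complex.I * (a - b))
      = Complex.exp (Complex.I * a) * Complex.exp (-(Complex.I * b)) := by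
    rw [← Complex.exp_add]; congr 1; ring
  rw [hsplit]
  push_cast
  ring

lemma charExp_def (ζ : En n) : T.charExp ζ = -Complex.I * ((inner ℝ T.b ζ : ℝ) : ℂ)
    + (1 / 2 : ℂ) * (((∑ i, ∑ j, T.Q i j * ζ i * ζ j : ℝ)) : ℂ)
    + ∫ x, F ζ x ∂T.ν := rfl

lemma key (ξ η : En n) :
    T.charExp ξ + (starRingEnd ℂ) (T.charExp η) - T.charExp (ξ - η)
      = ((∑ i, ∑ j, T.Q i j * ξ i * η j : ℝ) : ℂ)
        + ∫ x, g ξ x * (starRingEnd ℂ) (g η x) ∂T.ν := by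
  have hconj : (starRingEnd ℂ) (T.charExp η) = Complex.I * ((inner ℝ T.b η : ℝ) : ℂ)
      + (1 / 2 : ℂ) * (((∑ i, ∑ j, T.Q i j * η i * η j : ℝ)) : ℂ)
      + ∫ x, (starRingEnd ℂ) (F η x) ∂T.ν := by
    rw [charExp_def T η, map_add, map_add, integral_conj, map_mul, map_mul, map_neg,
      Complex.conj_I, Complex.conj_ofReal, Complex.conj_ofReal]
    norm_num [map_ofNat]
  have hint : (∫ x, F ξ x ∂T.ν) + (∫ x, (starRingEnd ℂ) (F η x) ∂T.ν)
      - ∫ x, F (ξ - η) x ∂T.ν = ∫ x, g ξ x * (starRingEnd ℂ) (g η x) ∂T.ν := by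
    have e2 : ∫ x, (F ξ x + (starRingEnd ℂ) (F η x)) ∂T.ν
        = (∫ x, F ξ x ∂T.ν) + ∫ x, (starRingEnd ℂ) (F η x) ∂T.ν :=
      integral_add (F_int T ξ) (Fconj_int T η)
    have e1 : ∫ x, ((F ξ x + (starRingEnd ℂ) (F η x)) - F (ξ - η) x) ∂T.ν
        = (∫ x, (F ξ x + (starRingEnd ℂ) (F η x)) ∂T.ν) - ∫ x, F (ξ - η) x ∂T.ν :=
      integral_sub ((F_int T ξ).add (Fconj_int T η)) (F_int T (ξ - η))
    rw [← e2, ← e1]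
    exact integral_congr_ae (ae_of_all _ fun x => F_combine ξ η x)
  have hb : ((inner ℝ T.b (ξ - η) : ℝ) : ℂ)
      = ((inner ℝ T.b ξ : ℝ) : ℂ) - ((inner ℝ T.b η : ℝ) : ℂ) := by
    rw [inner_sub_right]; push_cast; ring
  have hq : ((∑ i, ∑ j, T.Q i j * (ξ - η) i * (ξ - η) j : ℝ) : ℂ)
      = ((∑ i, ∑ j, T.Q i j * ξ i * ξ j : ℝ) : ℂ)
        - 2 * ((∑ i, ∑ j, T.Q i j * ξ i * η j : ℝ) : ℂ)
        + ((∑ i, ∑ j, T.Q i j * η i * η j : ℝ) : ℂ) := by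
    rw [q_sub T.Q T.hQsymm ξ η]; push_cast; ring
  rw [charExp_def T ξ, charExp_def T (ξ - η), hconj, hb, hq, ← hint]
  ring

lemma charExp_zero : T.charExp (0 : En n) = 0 := by
  rw [charExp_def]
  have hF0 : ∀ x : En n, F (0 : En n) x = 0 := by
    intro x
    unfold F
    simp [inner_zero_left]
  simp [hF0, inner_zero_right]

lemma re_eq (ξ : En n) :
    2 * (T.charExp ξ).re = (∑ i, ∑ j, T.Q i j * ξ i * ξ j)
      + ∫ x, ‖g ξ x‖ ^ 2 ∂T.ν := by
  have h := key T ξ ξ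
  rw [sub_self, charExp_zero, sub_zero, Complex.add_conj] at h
  have hgg : (fun x => g ξ x * (starRingEnd ℂ) (g ξ x))
      = fun x => ((‖g ξ x‖ ^ 2 : ℝ) : ℂ) := by
    funext x
    rw [Complex.mul_conj]
    norm_cast
    rw [Complex.normSq_eq_norm_sq]
  have hOR : ∫ x, ((‖g ξ x‖ ^ 2 : ℝ) : ℂ) ∂T.ν = ((∫ x, ‖g ξ x‖ ^ 2 ∂T.ν : ℝ) : ℂ) :=
    integral_ofReal
  rw [hgg, hOR] at h
  exact_mod_cast h

lemma re_nonneg (ξ : En n) : 0 ≤ (T.charExp ξ).re := by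
  have h := re_eq T ξ
  have h1 : 0 ≤ ∑ i, ∑ j, T.Q i j * ξ i * ξ j := by
    simpa using q_pos T (fun i => ξ i)
  have h2 : 0 ≤ ∫ x, ‖g ξ x‖ ^ 2 ∂T.ν := integral_nonneg fun x => sq_nonneg _
  linarith

lemma int_cs (ξ η : En n) :
    (∫ x, ‖g ξ x‖ * ‖g η x‖ ∂T.ν) ^ 2
      ≤ (∫ x, ‖g ξ x‖ ^ 2 ∂T.ν) * (∫ x, ‖g η x‖ ^ 2 ∂T.ν) := by
  set A := ∫ x, ‖g ξ x‖ ^ 2 ∂T.ν with hA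
  set C := ∫ x, ‖g η x‖ ^ 2 ∂T.ν with hC
  set Bi := ∫ x, ‖g ξ x‖ * ‖g η x‖ ∂T.ν with hBi
  have h : ∀ t : ℝ, 0 ≤ C * (t * t) + (2 * Bi) * t + A := by
    intro t
    have hfe : (fun x => (‖g ξ x‖ + t * ‖g η x‖) ^ 2)
        = fun x => ‖g ξ x‖ ^ 2 + ((2 * t) * (‖g ξ x‖ * ‖g η x‖) + (t * t) * ‖g η x‖ ^ 2) := by
      funext x; ring
    have e1 : ∫ x, (‖g ξ x‖ ^ 2 + ((2 * t) * (‖g ξ x‖ * ‖g η x‖) + (t * t) * ‖g η x‖ ^ 2)) ∂T.ν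
        = (∫ x, ‖g ξ x‖ ^ 2 ∂T.ν)
          + ∫ x, ((2 * t) * (‖g ξ x‖ * ‖g η x‖) + (t * t) * ‖g η x‖ ^ 2) ∂T.ν :=
      integral_add (g2_int T ξ)
        (((gg_int T ξ η).const_mul _).add ((g2_int T η).const_mul _))
    have e2 : ∫ x, ((2 * t) * (‖g ξ x‖ * ‖g η x‖) + (t * t) * ‖g η x‖ ^ 2) ∂T.ν
        = (∫ x, (2 * t) * (‖g ξ x‖ * ‖g η x‖) ∂T.ν) + ∫ x, (t * t) * ‖g η x‖ ^ 2 ∂T.ν :=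
      integral_add ((gg_int T ξ η).const_mul _) ((g2_int T η).const_mul _)
    have hInt : ∫ x, (‖g ξ x‖ + t * ‖g η x‖) ^ 2 ∂T.ν
        = A + ((2 * t) * Bi + (t * t) * C) := by
      rw [hfe, e1, e2, integral_const_mul, integral_const_mul]
    have h0 : 0 ≤ ∫ x, (‖g ξ x‖ + t * ‖g η x‖) ^ 2 ∂T.ν :=
      integral_nonneg fun x => sq_nonneg _
    rw [hInt] at h0
    linarith
  have hd := discrim_le_zero h
  rw [discrim] at hd
  nlinarith

end Statement2Aux

/-- `|ψ(ξ) + conj ψ(η) − ψ(ξ−η)|² ≤ 4 |ψ(ξ)| |ψ(η)|`. -/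
theorem statement2 {n : ℕ} (hn : 0 < n) (T : LevyTriplet n) (ξ η : En n) :
    ‖T.charExp ξ + (starRingEnd ℂ) (T.charExp η) - T.charExp (ξ - η)‖ ^ 2 ≤
      4 * ‖T.charExp ξ‖ * ‖T.charExp η‖ := by
  classical
  open Statement2Aux in
  have hkey := Statement2Aux.key T ξ η
  set q1 := ∑ i, ∑ j, T.Q i j * ξ i * ξ j with hq1e
  set q2 := ∑ i, ∑ j, T.Q i j * η i * η j with hq2e
  set Bq := ∑ i, ∑ j, T.Q i j * ξ i * η j with hBqe
  set A := ∫ x, ‖Statement2Aux.g ξ x‖ ^ 2 ∂T.ν with hAe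
  set C := ∫ x, ‖Statement2Aux.g η x‖ ^ 2 ∂T.ν with hCe
  set Bi := ∫ x, ‖Statement2Aux.g ξ x‖ * ‖Statement2Aux.g η x‖ ∂T.ν with hBie
  have hq1n : 0 ≤ q1 := by
    rw [hq1e]; simpa using Statement2Aux.q_pos T (fun i => ξ i)
  have hq2n : 0 ≤ q2 := by
    rw [hq2e]; simpa using Statement2Aux.q_pos T (fun i => η i)
  have hAn : 0 ≤ A := integral_nonneg fun x => sq_nonneg _
  have hCn : 0 ≤ C := integral_nonneg fun x => sq_nonneg _
  have hBin : 0 ≤ Bi := integral_nonneg fun x => mul_nonneg (norm_nonneg _) (norm_nonneg _)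
  have hqcs : Bq ^ 2 ≤ q1 * q2 := Statement2Aux.q_cs T ξ η
  have hics : Bi ^ 2 ≤ A * C := Statement2Aux.int_cs T ξ η
  have hre1 : 2 * (T.charExp ξ).re = q1 + A := Statement2Aux.re_eq T ξ
  have hre2 : 2 * (T.charExp η).re = q2 + C := Statement2Aux.re_eq T η
  have habs1 : (T.charExp ξ).re ≤ ‖T.charExp ξ‖ := Complex.re_le_norm _
  have habs2 : (T.charExp η).re ≤ ‖T.charExp η‖ := Complex.re_le_norm _
  have hstep : ‖T.charExp ξ + (starRingEnd ℂ) (T.charExp η) - T.charExp (ξ - η)‖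
      ≤ |Bq| + Bi := by
    rw [hkey]
    refine (norm_add_le _ _).trans
      (add_le_add (le_of_eq (by rw [Complex.norm_real, Real.norm_eq_abs])) ?_)
    calc ‖∫ x, Statement2Aux.g ξ x * (starRingEnd ℂ) (Statement2Aux.g η x) ∂T.ν‖
        = ‖∫ x, Statement2Aux.g ξ x * (starRingEnd ℂ) (Statement2Aux.g η x) ∂T.ν‖ :=
          rfl
      _ ≤ ∫ x, ‖Statement2Aux.g ξ x * (starRingEnd ℂ) (Statement2Aux.g η x)‖ ∂T.ν :=
          norm_integral_le_integral_norm _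
      _ = Bi := by
          rw [hBie]
          exact integral_congr_ae (ae_of_all _ fun x => by
            simp only [norm_mul, RCLike.norm_conj])
  have hmid : (|Bq| + Bi) ^ 2 ≤ (q1 + A) * (q2 + C) := by
    have h1 : |Bq| ^ 2 ≤ q1 * q2 := by rw [_root_.sq_abs]; exact hqcs
    have hs : 0 ≤ q1 * C + A * q2 := add_nonneg (mul_nonneg hq1n hCn) (mul_nonneg hAn hq2n)
    have key1 : (2 * |Bq| * Bi) ^ 2 ≤ (q1 * C + A * q2) ^ 2 := by
      nlinarith [mul_le_mul h1 hics (sq_nonneg Bi) (mul_nonneg hq1n hq2n),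
        sq_nonneg (q1 * C - A * q2)]
    have key2 : 2 * |Bq| * Bi ≤ q1 * C + A * q2 := by
      nlinarith [key1, mul_nonneg (abs_nonneg Bq) hBin, hs]
    nlinarith [key2, h1, hics]
  calc ‖T.charExp ξ + (starRingEnd ℂ) (T.charExp η) - T.charExp (ξ - η)‖ ^ 2
      ≤ (|Bq| + Bi) ^ 2 := by
        have := pow_le_pow_left₀ (norm_nonneg _) hstep 2
        exact this
    _ ≤ (q1 + A) * (q2 + C) := hmid
    _ ≤ (2 * ‖T.charExp ξ‖) * (2 * ‖T.charExp η‖) := by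
        have h1 : q1 + A ≤ 2 * ‖T.charExp ξ‖ := by linarith
        have h2 : q2 + C ≤ 2 * ‖T.charExp η‖ := by linarith
        exact mul_le_mul h1 h2 (by linarith [hq2n, hCn]) (by positivity)
    _ = 4 * ‖T.charExp ξ‖ * ‖T.charExp η‖ := by ring
end
end

section
/- Let ψ be the characteristic exponent of a Lévy triplet (b, Q, ν) on ℝ^n. Then the zero set Z = {ξ ∈ ℝ^n : ψ(ξ) = 0} is a topologically closed additive subgroup of ℝ^n (it contains 0 and is closed under addition and negation), and every element of Z is a period of ψ: if ψ(η) = 0 then ψ(ξ + η) = ψ(ξ) for all ξ ∈ ℝ^n. -/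
open MeasureTheory Complex
open scoped ENNReal Topology Pointwise

noncomputable section

section Aux
open Matrix

variable {n : ℕ}

/-- The integrand of the integral part of `charExp`. -/
def Fint (ξ x : En n) : ℂ :=
  1 - Complex.exp (Complex.I * ((inner ℝ ξ x : ℝ) : ℂ))
    + Complex.I * ((inner ℝ ξ x : ℝ) : ℂ)
      * ({y : En n | ‖y‖ < 1}.indicator (fun _ => (1 : ℂ)) x)

lemma LevyTriplet.charExp_eq (T : LevyTriplet n) (ξ : En n) :
    T.charExp ξ = -Complex.I * ((inner ℝ T.b ξ : ℝ) : ℂ)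
      + (1 / 2 : ℂ) * (((∑ i, ∑ j, T.Q i j * ξ i * ξ j : ℝ)) : ℂ)
      + ∫ x, Fint ξ x ∂T.ν := rfl

lemma measurable_Fint (ξ : En n) : Measurable (Fint ξ) := by
  have h1 : Measurable fun x : En n => ((inner ℝ ξ x : ℝ) : ℂ) :=
    (Complex.continuous_ofReal.comp (continuous_const.inner continuous_id)).measurable
  have hset : MeasurableSet {y : En n | ‖y‖ < 1} :=
    (isOpen_lt continuous_norm continuous_const).measurableSet
  have hind : Measurable ({y : En n | ‖y‖ < 1}.indicator (fun _ => (1 : ℂ))) :=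
    measurable_const.indicator hset
  exact (measurable_const.sub
      (Complex.continuous_exp.measurable.comp (measurable_const.mul h1))).add
    ((measurable_const.mul h1).mul hind)

lemma norm_Fint_le {R : ℝ} (hR : 0 ≤ R) {ξ : En n} (hξ : ‖ξ‖ ≤ R) (x : En n) :
    ‖Fint ξ x‖ ≤ (R + 2) * (R ^ 2 + 1) * min (‖x‖ ^ 2) 1 := by
  set u : ℝ := (inner ℝ ξ x : ℝ) with hu
  have hub : |u| ≤ R * ‖x‖ := by
    refine le_trans (abs_real_inner_le_norm ξ x) ?_
    exact mul_le_mul_of_nonneg_right hξ (norm_nonneg x)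
  have hexpnorm : ‖Complex.exp (Complex.I * (u : ℂ))‖ ≤ 1 := by
    rw [mul_comm]
    simp [Complex.norm_exp_ofReal_mul_I]
  have hsub2 : ‖(1 : ℂ) - Complex.exp (Complex.I * (u : ℂ))‖ ≤ 2 := by
    calc ‖(1 : ℂ) - Complex.exp (Complex.I * (u : ℂ))‖
        ≤ ‖(1 : ℂ)‖ + ‖Complex.exp (Complex.I * (u : ℂ))‖ := norm_sub_le _ _
      _ ≤ 1 + 1 := by simpa using hexpnorm
      _ = 2 := by norm_num
  by_cases hx : ‖x‖ < 1
  · have hi : ({y : En n | ‖y‖ < 1}.indicator (fun _ => (1 : ℂ)) x) = 1 :=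
      Set.indicator_of_mem (show x ∈ {y : En n | ‖y‖ < 1} from hx) _
    have hmin : min (‖x‖ ^ 2) 1 = ‖x‖ ^ 2 := min_eq_left (by nlinarith [norm_nonneg x])
    by_cases hu1 : |u| ≤ 1
    · have h1 : ‖Fint ξ x‖
          = ‖Complex.exp (Complex.I * (u : ℂ)) - 1 - Complex.I * (u : ℂ)‖ := by
        rw [Fint, hi, mul_one, ← hu]
        rw [show (1 : ℂ) - Complex.exp (Complex.I * (u : ℂ)) + Complex.I * (u : ℂ)
            = -(Complex.exp (Complex.I * (u : ℂ)) - 1 - Complex.I * (u : ℂ)) by ring]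
        rw [norm_neg]
      have h2 : ‖Complex.exp (Complex.I * (u : ℂ)) - 1 - Complex.I * (u : ℂ)‖
          ≤ |u| ^ 2 := by
        have := Complex.norm_exp_sub_one_sub_id_le (x := Complex.I * (u : ℂ)) (by simpa using hu1)
        simpa using this
      rw [h1, hmin]
      have h3 : |u| ^ 2 ≤ R ^ 2 * ‖x‖ ^ 2 := by nlinarith [abs_nonneg u, norm_nonneg x]
      nlinarith [norm_nonneg x, sq_nonneg (‖x‖)]
    · push_neg at hu1
      have hF : ‖Fint ξ x‖ ≤ 2 + |u| := by
        rw [Fint, hi, mul_one, ← hu]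
        calc ‖1 - Complex.exp (Complex.I * (u : ℂ)) + Complex.I * (u : ℂ)‖
            ≤ ‖(1 : ℂ) - Complex.exp (Complex.I * (u : ℂ))‖ + ‖Complex.I * (u : ℂ)‖ :=
              norm_add_le _ _
          _ ≤ 2 + |u| := by
              refine add_le_add hsub2 ?_
              simp [Complex.norm_def, Complex.norm_I]
      rw [hmin]
      have hRx : 1 < R * ‖x‖ := lt_of_lt_of_le hu1 hub
      have hxR : |u| ≤ R := le_trans hub (by nlinarith [norm_nonneg x])
      have hR2x : 1 < R ^ 2 * ‖x‖ ^ 2 := by nlinarith [norm_nonneg x]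
      calc ‖Fint ξ x‖ ≤ 2 + |u| := hF
        _ ≤ R + 2 := by linarith [hxR]
        _ ≤ (R + 2) * (R ^ 2 * ‖x‖ ^ 2) := by nlinarith
        _ ≤ (R + 2) * (R ^ 2 + 1) * ‖x‖ ^ 2 := by nlinarith [norm_nonneg x, sq_nonneg ‖x‖]
  · have hi : ({y : En n | ‖y‖ < 1}.indicator (fun _ => (1 : ℂ)) x) = 0 :=
      Set.indicator_of_notMem (show x ∉ {y : En n | ‖y‖ < 1} from hx) _
    push_neg at hx
    have hmin : min (‖x‖ ^ 2) 1 = 1 := min_eq_right (by nlinarith)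
    have : ‖Fint ξ x‖ ≤ 2 := by
      rw [Fint, hi, mul_zero, add_zero, ← hu]
      exact hsub2
    rw [hmin, mul_one]
    nlinarith [this]

lemma LevyTriplet.integrable_min (T : LevyTriplet n) :
    Integrable (fun x => min (‖x‖ ^ 2) 1) T.ν := by
  refine ⟨((continuous_norm.pow 2).min continuous_const).aestronglyMeasurable, ?_⟩
  rw [hasFiniteIntegral_iff_norm]
  have he : ∀ x : En n, ENNReal.ofReal ‖min (‖x‖ ^ 2) 1‖ = ENNReal.ofReal (min (‖x‖ ^ 2) 1) :=
    fun x => by rw [Real.norm_of_nonneg (le_min (by positivity) zero_le_one)]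
  simpa only [he] using T.hνint

lemma LevyTriplet.integrable_Fint (T : LevyTriplet n) (ξ : En n) :
    Integrable (Fint ξ) T.ν := by
  refine Integrable.mono' (T.integrable_min.const_mul ((‖ξ‖ + 2) * (‖ξ‖ ^ 2 + 1)))
    (measurable_Fint ξ).aestronglyMeasurable (Filter.Eventually.of_forall fun x => ?_)
  exact norm_Fint_le (norm_nonneg ξ) le_rfl x

lemma re_Fint (ξ x : En n) : (Fint ξ x).re = 1 - Real.cos (inner ℝ ξ x) := by
  rw [Fint, mul_comm Complex.I ((inner ℝ ξ x : ℝ) : ℂ), Complex.exp_mul_I,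
    ← Complex.ofReal_cos, ← Complex.ofReal_sin]
  by_cases h : x ∈ {y : En n | ‖y‖ < 1}
  · rw [Set.indicator_of_mem h, mul_one]
    simp only [Complex.add_re, Complex.sub_re, Complex.one_re, Complex.mul_re,
      Complex.ofReal_re, Complex.ofReal_im, Complex.I_re, Complex.I_im]
    ring
  · rw [Set.indicator_of_notMem h, mul_zero]
    simp only [Complex.add_re, Complex.sub_re, Complex.one_re, Complex.mul_re,
      Complex.ofReal_re, Complex.ofReal_im, Complex.I_re, Complex.I_im, Complex.zero_re]
    ring

lemma quad_eq (Q : Matrix (Fin n) (Fin n) ℝ) (v : En n) :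
    (∑ i, ∑ j, Q i j * v i * v j) = v ⬝ᵥ Q *ᵥ v := by
  simp only [dotProduct, Matrix.mulVec, Finset.mul_sum]
  exact Finset.sum_congr rfl fun i _ => Finset.sum_congr rfl fun j _ => by ring

lemma LevyTriplet.re_charExp (T : LevyTriplet n) (ξ : En n) :
    (T.charExp ξ).re = (1 / 2) * (∑ i, ∑ j, T.Q i j * ξ i * ξ j)
      + ∫ x, (1 - Real.cos (inner ℝ ξ x)) ∂T.ν := by
  have h := integral_re (T.integrable_Fint ξ)
  simp only [RCLike.re_to_complex] at h
  have h2 : ∫ x, (Fint ξ x).re ∂T.ν = ∫ x, (1 - Real.cos (inner ℝ ξ x)) ∂T.ν := by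
    simp only [re_Fint]
  rw [charExp_eq, Complex.add_re, Complex.add_re, ← h, h2]
  have : ((1 / 2 : ℂ) * (((∑ i, ∑ j, T.Q i j * ξ i * ξ j : ℝ)) : ℂ)).re
      = (1 / 2) * (∑ i, ∑ j, T.Q i j * ξ i * ξ j) := by
    rw [show (1 / 2 : ℂ) = (((1 / 2 : ℝ)) : ℂ) by norm_num, ← Complex.ofReal_mul,
      Complex.ofReal_re]
  rw [this]
  simp [Complex.mul_re, Complex.I_re, Complex.I_im]

lemma LevyTriplet.integrable_one_sub_cos (T : LevyTriplet n) (ξ : En n) :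
    Integrable (fun x => 1 - Real.cos (inner ℝ ξ x)) T.ν := by
  have := (T.integrable_Fint ξ).re
  simp only [RCLike.re_to_complex, re_Fint] at this
  exact this

lemma LevyTriplet.zero_consequences (T : LevyTriplet n) {η : En n}
    (hη : T.charExp η = 0) :
    (∑ i, ∑ j, T.Q i j * η i * η j) = 0 ∧ T.Q *ᵥ η = 0 ∧
      ∀ᵐ x ∂T.ν, Real.cos (inner ℝ η x) = 1 := by
  have hre : (T.charExp η).re = 0 := by rw [hη]; rfl
  rw [T.re_charExp] at hre
  have hq0 : 0 ≤ (η : Fin n → ℝ) ⬝ᵥ T.Q *ᵥ η := by simpa using T.hQpos.dotProduct_mulVec_nonneg η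
  have hqe := quad_eq T.Q η
  have hnn : 0 ≤ᵐ[T.ν] fun x => 1 - Real.cos (inner ℝ η x) :=
    Filter.Eventually.of_forall fun x => by
      have := Real.cos_le_one (inner ℝ η x); simp only [Pi.zero_apply]; linarith
  have hInn : 0 ≤ ∫ x, (1 - Real.cos (inner ℝ η x)) ∂T.ν := integral_nonneg_of_ae hnn
  have hqnn : 0 ≤ (∑ i, ∑ j, T.Q i j * η i * η j) := by rw [hqe]; exact hq0
  have hI0 : ∫ x, (1 - Real.cos (inner ℝ η x)) ∂T.ν = 0 := by linarith
  have hqz : (∑ i, ∑ j, T.Q i j * η i * η j) = 0 := by linarith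
  have hmv : T.Q *ᵥ η = 0 := by
    refine (T.hQpos.dotProduct_mulVec_zero_iff η).mp ?_
    have : (η : Fin n → ℝ) ⬝ᵥ T.Q *ᵥ η = 0 := by rw [← hqe]; exact hqz
    simpa using this
  refine ⟨hqz, hmv, ?_⟩
  have := (integral_eq_zero_iff_of_nonneg_ae hnn (T.integrable_one_sub_cos η)).mp hI0
  filter_upwards [this] with x hx
  have : (1 : ℝ) - Real.cos (inner ℝ η x) = 0 := hx
  linarith

lemma LevyTriplet.charExp_add_eq (T : LevyTriplet n) {η : En n}
    (hη : T.charExp η = 0) (ξ : En n) : T.charExp (ξ + η) = T.charExp ξ := by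
  obtain ⟨hqz, hmv, hcos⟩ := T.zero_consequences hη
  have hmv' : ∀ i, (∑ j, T.Q i j * η j) = 0 := fun i => by
    have := congrFun hmv i
    simpa [Matrix.mulVec, dotProduct] using this
  have hmv'' : ∀ j, (∑ i, T.Q i j * η i) = 0 := fun j => by
    have e : (∑ i, T.Q i j * η i) = ∑ i, T.Q j i * η i :=
      Finset.sum_congr rfl fun i _ => by rw [T.hQsymm.apply j i]
    rw [e]; exact hmv' j
  -- a.e. splitting of the integrand
  have key : ∀ᵐ x ∂T.ν, Fint (ξ + η) x = Fint ξ x + Fint η x := by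
    filter_upwards [hcos] with x hc
    have hs : Real.sin (inner ℝ η x) = 0 := by
      have h2 : Real.sin (inner ℝ η x) ^ 2 = 0 := by
        nlinarith [Real.sin_sq_add_cos_sq (inner ℝ η x)]
      exact pow_eq_zero_iff two_ne_zero |>.mp h2
    have hexp : Complex.exp (Complex.I * ((inner ℝ η x : ℝ) : ℂ)) = 1 := by
      rw [mul_comm, Complex.exp_mul_I, ← Complex.ofReal_cos, ← Complex.ofReal_sin, hc, hs]
      simp
    have hinner : (inner ℝ (ξ + η) x : ℝ) = (inner ℝ ξ x : ℝ) + (inner ℝ η x : ℝ) :=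
      inner_add_left ξ η x
    simp only [Fint, hinner, Complex.ofReal_add]
    rw [mul_add, Complex.exp_add, hexp, mul_one]
    ring
  have hIsum : ∫ x, Fint (ξ + η) x ∂T.ν
      = (∫ x, Fint ξ x ∂T.ν) + ∫ x, Fint η x ∂T.ν := by
    rw [integral_congr_ae key, integral_add (T.integrable_Fint ξ) (T.integrable_Fint η)]
  -- quadratic form
  have hq : (∑ i, ∑ j, T.Q i j * (ξ + η) i * (ξ + η) j)
      = ∑ i, ∑ j, T.Q i j * ξ i * ξ j := by
    have keyq : ∀ i, (∑ j, T.Q i j * (ξ + η) i * (ξ + η) j)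
        = (∑ j, T.Q i j * ξ i * ξ j) + ((ξ i + η i) * (∑ j, T.Q i j * η j)
          + ∑ j, (T.Q i j * η i) * ξ j) := by
      intro i
      rw [Finset.mul_sum, ← Finset.sum_add_distrib, ← Finset.sum_add_distrib]
      refine Finset.sum_congr rfl fun j _ => ?_
      show T.Q i j * (ξ i + η i) * (ξ j + η j) = _
      ring
    simp only [keyq, Finset.sum_add_distrib]
    have z1 : (∑ i, (ξ i + η i) * (∑ j, T.Q i j * η j)) = 0 :=
      Finset.sum_eq_zero fun i _ => by rw [hmv' i, mul_zero]
    have z2 : (∑ i, ∑ j, (T.Q i j * η i) * ξ j) = 0 := by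
      rw [Finset.sum_comm]
      refine Finset.sum_eq_zero fun j _ => ?_
      have e : (∑ i, (T.Q i j * η i) * ξ j) = (∑ i, T.Q i j * η i) * ξ j :=
        (Finset.sum_mul _ _ _).symm
      rw [e, hmv'' j, zero_mul]
    rw [z1, z2, add_zero, add_zero]
  have hb : (inner ℝ T.b (ξ + η) : ℝ) = (inner ℝ T.b ξ : ℝ) + (inner ℝ T.b η : ℝ) :=
    inner_add_right T.b ξ η
  have hzero := hη
  rw [T.charExp_eq, hqz] at hzero
  rw [T.charExp_eq, T.charExp_eq, hIsum, hq, hb]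
  push_cast
  push_cast at hzero
  linear_combination hzero

lemma LevyTriplet.charExp_zero' (T : LevyTriplet n) : T.charExp 0 = 0 := by
  rw [T.charExp_eq]
  have h0 : ∀ x : En n, (inner ℝ (0 : En n) x : ℝ) = 0 := fun x => inner_zero_left x
  have hz : ∀ i : Fin n, (0 : En n) i = 0 := fun _ => rfl
  simp [Fint, h0, hz, inner_zero_right]

lemma LevyTriplet.continuous_charExp (T : LevyTriplet n) : Continuous T.charExp := by
  have hfe : T.charExp = fun ξ => -Complex.I * ((inner ℝ T.b ξ : ℝ) : ℂ)
      + (1 / 2 : ℂ) * (((∑ i, ∑ j, T.Q i j * ξ i * ξ j : ℝ)) : ℂ)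
      + ∫ x, Fint ξ x ∂T.ν := funext (T.charExp_eq)
  rw [hfe]
  have h1 : Continuous fun ξ : En n => -Complex.I * ((inner ℝ T.b ξ : ℝ) : ℂ) :=
    continuous_const.mul (Complex.continuous_ofReal.comp (continuous_const.inner continuous_id))
  have hcoord : ∀ i : Fin n, Continuous fun ξ : En n => ξ i := fun i =>
    (continuous_apply i).comp (PiLp.continuous_ofLp _ _)
  have h2 : Continuous fun ξ : En n =>
      (1 / 2 : ℂ) * (((∑ i, ∑ j, T.Q i j * ξ i * ξ j : ℝ)) : ℂ) := by
    refine continuous_const.mul (Complex.continuous_ofReal.comp ?_)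
    refine continuous_finset_sum _ fun i _ => continuous_finset_sum _ fun j _ => ?_
    exact (continuous_const.mul (hcoord i)).mul (hcoord j)
  have h3 : Continuous fun ξ : En n => ∫ x, Fint ξ x ∂T.ν := by
    rw [continuous_iff_continuousAt]
    intro ξ₀
    set R : ℝ := ‖ξ₀‖ + 1 with hR
    have hR0 : 0 ≤ R := by positivity
    refine continuousAt_of_dominated
      (bound := fun x => (R + 2) * (R ^ 2 + 1) * min (‖x‖ ^ 2) 1)
      (Filter.Eventually.of_forall fun ξ => (measurable_Fint ξ).aestronglyMeasurable)
      ?_ (T.integrable_min.const_mul _) ?_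
    · have hball : Metric.ball ξ₀ 1 ∈ 𝓝 ξ₀ := Metric.ball_mem_nhds _ one_pos
      filter_upwards [hball] with ξ hξ
      refine Filter.Eventually.of_forall fun x => ?_
      have hd : dist ξ ξ₀ < 1 := Metric.mem_ball.mp hξ
      have hnd : ‖ξ‖ - ‖ξ₀‖ ≤ ‖ξ - ξ₀‖ := norm_sub_norm_le ξ ξ₀
      have : ‖ξ‖ ≤ R := by
        rw [dist_eq_norm] at hd
        rw [hR]; linarith
      exact norm_Fint_le hR0 this x
    · refine Filter.Eventually.of_forall fun x => ?_
      have hi : Continuous fun ξ : En n => ((inner ℝ ξ x : ℝ) : ℂ) :=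
        Complex.continuous_ofReal.comp (continuous_id.inner continuous_const)
      have hc : Continuous fun ξ : En n => Fint ξ x :=
        (continuous_const.sub (Complex.continuous_exp.comp (continuous_const.mul hi))).add
          ((continuous_const.mul hi).mul continuous_const)
      exact hc.continuousAt
  exact (h1.add h2).add h3

end Aux

/-- The zero set of `ψ` is a closed additive subgroup of `ℝ^n`, and each of its
elements is a period of `ψ`. -/
theorem statement3 {n : ℕ} (hn : 0 < n) (T : LevyTriplet n) :
    IsClosed {ξ : En n | T.charExp ξ = 0} ∧
    T.charExp 0 = 0 ∧
    (∀ ξ η : En n, T.charExp ξ = 0 → T.charExp η = 0 → T.charExp (ξ + η) = 0) ∧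
    (∀ ξ : En n, T.charExp ξ = 0 → T.charExp (-ξ) = 0) ∧
    (∀ η : En n, T.charExp η = 0 → ∀ ξ : En n, T.charExp (ξ + η) = T.charExp ξ) := by
  refine ⟨?_, T.charExp_zero', fun ξ η hξ hη => ?_, fun ξ hξ => ?_,
    fun η hη ξ => T.charExp_add_eq hη ξ⟩
  · have hs : {ξ : En n | T.charExp ξ = 0} = T.charExp ⁻¹' {0} := rfl
    rw [hs]
    exact isClosed_singleton.preimage T.continuous_charExp
  · rw [T.charExp_add_eq hη ξ]; exact hξ
  · have h := T.charExp_add_eq hξ (-ξ)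
    rw [neg_add_cancel] at h
    rw [← h]
    exact T.charExp_zero'
end
end

section
/- Let μ be a Borel probability measure on ℝ^n. Then the following are equivalent: (i) there exist a point θ⁰ ∈ ℝ^n and a basis θ¹, …, θⁿ of ℝ^n such that supp μ ⊆ θ⁰ + {l₁θ¹ + ⋯ + lₙθⁿ : (l₁, …, lₙ) ∈ ℤⁿ}; (ii) there exist linearly independent vectors ξ¹, …, ξⁿ ∈ ℝ^n such that |∫ e^{i⟨ξʲ, x⟩} μ(dx)| = 1 for every j = 1, …, n. -/
open MeasureTheory Complex
open scoped ENNReal Topology Pointwise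

noncomputable section

section AuxStatement7
variable {n : ℕ}

lemma measSupport_compl_null (μ : Measure (En n)) : μ (measSupport μ)ᶜ = 0 := by
  apply measure_null_of_locally_null
  intro x hx
  simp only [measSupport, Set.mem_compl_iff, Set.mem_setOf_eq, not_forall] at hx
  obtain ⟨U, hU, hxU, hU0⟩ := hx
  exact ⟨U, mem_nhdsWithin_of_mem_nhds (hU.mem_nhds hxU),
    le_zero_iff.mp (not_lt.mp hU0)⟩

lemma measSupport_subset_closed {μ : Measure (En n)} {C : Set (En n)} (hC : IsClosed C)
    (h : μ Cᶜ = 0) : measSupport μ ⊆ C := fun x hx => by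
  by_contra hxC
  exact (hx Cᶜ hC.isOpen_compl hxC).ne' h

lemma abs_exp_I_mul (r : ℝ) : ‖Complex.exp (Complex.I * r)‖ = 1 := by
  rw [mul_comm]; exact Complex.norm_exp_ofReal_mul_I r

lemma contF (ξ : En n) : Continuous fun x : En n => Complex.exp (Complex.I * ((inner ℝ ξ x : ℝ) : ℂ)) := by
  exact Complex.continuous_exp.comp <| continuous_const.mul <|
    Complex.continuous_ofReal.comp (continuous_const.inner continuous_id)

lemma intF (μ : Measure (En n)) [IsProbabilityMeasure μ] (ξ : En n) :
    Integrable (fun x => Complex.exp (Complex.I * ((inner ℝ ξ x : ℝ) : ℂ))) μ := by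
  refine Integrable.mono' (integrable_const 1) (contF ξ).aestronglyMeasurable
    (Filter.Eventually.of_forall fun x => ?_)
  exact le_of_eq (by exact abs_exp_I_mul _)

lemma ae_eq_const_of_abs_one (μ : Measure (En n)) [IsProbabilityMeasure μ] (ξ : En n)
    (h : ‖∫ x, Complex.exp (Complex.I * ((inner ℝ ξ x : ℝ) : ℂ)) ∂μ‖ = 1) :
    ∀ᵐ x ∂μ, Complex.exp (Complex.I * ((inner ℝ ξ x : ℝ) : ℂ))
      = ∫ x, Complex.exp (Complex.I * ((inner ℝ ξ x : ℝ) : ℂ)) ∂μ := by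
  set f : En n → ℂ := fun x => Complex.exp (Complex.I * ((inner ℝ ξ x : ℝ) : ℂ)) with hf
  set c : ℂ := ∫ x, f x ∂μ with hc
  have hfi : Integrable f μ := intF μ ξ
  have hfnorm : ∀ x, ‖f x‖ = 1 := fun x => abs_exp_I_mul _
  have hnsq : Complex.normSq c = 1 := by
    rw [← Complex.sq_norm, h, one_pow]
  have hgint : Integrable (fun x => (starRingEnd ℂ) c * f x) μ := hfi.const_mul _
  have hgre : Integrable (fun x => ((starRingEnd ℂ) c * f x).re) μ := by
    simpa [RCLike.re_to_complex] using hgint.re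
  have hIg : ∫ x, ((starRingEnd ℂ) c * f x).re ∂μ = 1 := by
    have := integral_re (𝕜 := ℂ) hgint
    simp only [RCLike.re_to_complex] at this
    rw [this, MeasureTheory.integral_const_mul, ← hc, mul_comm, Complex.mul_conj]
    simpa using hnsq
  have hle : ∀ x, ((starRingEnd ℂ) c * f x).re ≤ 1 := fun x => by
    calc ((starRingEnd ℂ) c * f x).re ≤ ‖(starRingEnd ℂ) c * f x‖ :=
          Complex.re_le_norm _
      _ = 1 := by rw [norm_mul, Complex.norm_conj, h, hfnorm, one_mul]
  have hint1 : ∫ _x, (1 : ℝ) ∂μ = 1 := by simp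
  have heq : (fun x => ((starRingEnd ℂ) c * f x).re) =ᵐ[μ] fun _ => (1 : ℝ) := by
    rw [← MeasureTheory.integral_eq_iff_of_ae_le hgre (integrable_const 1)
      (Filter.Eventually.of_forall hle)]
    rw [hIg, hint1]
  filter_upwards [heq] with x hx

  have habsz : ‖(starRingEnd ℂ) c * f x‖ = 1 := by
    rw [norm_mul, Complex.norm_conj, h, hfnorm, one_mul]
  have hz1 : (starRingEnd ℂ) c * f x = 1 := by
    have hsq : ((starRingEnd ℂ) c * f x).re ^ 2 + ((starRingEnd ℂ) c * f x).im ^ 2 = 1 := by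
      have := Complex.sq_norm ((starRingEnd ℂ) c * f x)
      rw [habsz, one_pow] at this
      rw [this, Complex.normSq_apply]; ring
    have him : ((starRingEnd ℂ) c * f x).im = 0 := by nlinarith
    exact Complex.ext (by rw [hx, Complex.one_re]) (by rw [him, Complex.one_im])
  calc f x = 1 * f x := (one_mul _).symm
    _ = (c * (starRingEnd ℂ) c) * f x := by
          rw [Complex.mul_conj, hnsq]; norm_num
    _ = c * ((starRingEnd ℂ) c * f x) := by ring
    _ = c := by rw [hz1, mul_one]

lemma exists_dualBasis (B : Module.Basis (Fin n) ℝ (En n)) :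
    ∃ D : Module.Basis (Fin n) ℝ (En n), ∀ i j, (inner ℝ (D i) (B j) : ℝ) = if j = i then 1 else 0 := by
  let e1 : (En n →ₗ[ℝ] ℝ) ≃ₗ[ℝ] (En n →L[ℝ] ℝ) := LinearMap.toContinuousLinearMap
  let e2 := (InnerProductSpace.toDual ℝ (En n)).toLinearEquiv.symm
  refine ⟨B.dualBasis.map (e1.trans e2), fun i j => ?_⟩
  rw [Module.Basis.map_apply, LinearEquiv.trans_apply]
  show (inner ℝ (((InnerProductSpace.toDual ℝ (En n)).toLinearEquiv.symm)
    (e1 (B.dualBasis i))) (B j) : ℝ) = _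
  rw [show (((InnerProductSpace.toDual ℝ (En n)).toLinearEquiv.symm)
      (e1 (B.dualBasis i))) = (InnerProductSpace.toDual ℝ (En n)).symm
      (e1 (B.dualBasis i)) from rfl]
  rw [InnerProductSpace.toDual_symm_apply]
  show (B.dualBasis i).toContinuousLinearMap (B j) = _
  rw [LinearMap.coe_toContinuousLinearMap']
  exact B.dualBasis_apply_self i j

end AuxStatement7

/-- A probability measure on `ℝ^n` is a lattice distribution iff its
characteristic function has modulus one at `n` linearly independent points. -/
theorem statement7 {n : ℕ} (hn : 0 < n) (μ : Measure (En n)) (hμ : IsProbabilityMeasure μ) :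
    (∃ (θ₀ : En n) (θ : Fin n → En n), LinearIndependent ℝ θ ∧
        Submodule.span ℝ (Set.range θ) = ⊤ ∧
        measSupport μ ⊆ {x : En n | ∃ l : Fin n → ℤ, x = θ₀ + ∑ i, (l i : ℝ) • θ i}) ↔
    (∃ ξ : Fin n → En n, LinearIndependent ℝ ξ ∧
        ∀ j : Fin n,
          ‖∫ x, Complex.exp (Complex.I * ((inner ℝ (ξ j) x : ℝ) : ℂ)) ∂μ‖ = 1) := by
  have hπ : (2 * Real.pi) ≠ 0 := by positivity
  constructor
  · rintro ⟨θ₀, θ, hli, hspan, hsupp⟩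
    let B : Module.Basis (Fin n) ℝ (En n) := Module.Basis.mk hli hspan.ge
    obtain ⟨D, hD⟩ := exists_dualBasis B
    let u : ℝˣ := Units.mk0 (2 * Real.pi) hπ
    let Bξ : Module.Basis (Fin n) ℝ (En n) := D.unitsSMul (fun _ => u)
    have hBξ : ∀ j, Bξ j = (2 * Real.pi) • D j := fun j => by
      rw [Module.Basis.unitsSMul_apply]; rfl
    refine ⟨fun j => Bξ j, Bξ.linearIndependent, fun j => ?_⟩
    have hinner : ∀ i j, (inner ℝ (Bξ j) (θ i) : ℝ) = if i = j then 2 * Real.pi else 0 := by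
      intro i j
      rw [hBξ, real_inner_smul_left]
      have hθB : θ i = B i := (Module.Basis.mk_apply hli hspan.ge i).symm
      rw [hθB, hD j i]
      by_cases h : i = j <;> simp [h]
    have hae : ∀ᵐ x ∂μ, Complex.exp (Complex.I * ((inner ℝ (Bξ j) x : ℝ) : ℂ))
        = Complex.exp (Complex.I * ((inner ℝ (Bξ j) θ₀ : ℝ) : ℂ)) := by
      have hmem : measSupport μ ∈ ae μ := by
        rw [mem_ae_iff]; exact measSupport_compl_null μ
      filter_upwards [hmem] with x hx
      obtain ⟨l, hl⟩ := hsupp hx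
      have hval : (inner ℝ (Bξ j) x : ℝ) = inner ℝ (Bξ j) θ₀ + (l j : ℝ) * (2 * Real.pi) := by
        rw [hl, inner_add_right, inner_sum]
        congr 1
        rw [Finset.sum_eq_single j]
        · rw [real_inner_smul_right, hinner j j, if_pos rfl]
        · intro i _ hij
          rw [real_inner_smul_right, hinner i j, if_neg hij, mul_zero]
        · simp
      rw [hval]
      push_cast
      rw [mul_add, Complex.exp_add]
      have h1 : Complex.I * ((l j : ℂ) * (2 * (Real.pi : ℂ)))
          = (l j : ℂ) * (2 * (Real.pi : ℂ) * Complex.I) := by ring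
      rw [h1, Complex.exp_int_mul_two_pi_mul_I, mul_one]
    rw [integral_congr_ae hae, integral_const]
    simp only [probReal_univ, one_smul]
    exact abs_exp_I_mul _
  · rintro ⟨ξ, hli, habs⟩
    haveI : Nonempty (Fin n) := Fin.pos_iff_nonempty.mp hn
    have hcard : Fintype.card (Fin n) = Module.finrank ℝ (En n) := by simp
    let Bξ : Module.Basis (Fin n) ℝ (En n) := basisOfLinearIndependentOfCardEqFinrank hli hcard
    have hBξ : ∀ j, Bξ j = ξ j := fun j => by
      rw [coe_basisOfLinearIndependentOfCardEqFinrank]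
    obtain ⟨D, hD⟩ := exists_dualBasis Bξ
    let u : ℝˣ := Units.mk0 (2 * Real.pi) hπ
    let θB : Module.Basis (Fin n) ℝ (En n) := D.unitsSMul (fun _ => u)
    have hθB : ∀ i, θB i = (2 * Real.pi) • D i := fun i => by
      rw [Module.Basis.unitsSMul_apply]; rfl
    have hinner : ∀ i j, (inner ℝ (ξ j) (θB i) : ℝ) = if j = i then 2 * Real.pi else 0 := by
      intro i j
      rw [hθB, real_inner_smul_right, real_inner_comm, ← hBξ j, hD i j]
      by_cases h : j = i <;> simp [h]
    have hsub : ∀ j, measSupport μ ⊆ {x : En n |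
        Complex.exp (Complex.I * ((inner ℝ (ξ j) x : ℝ) : ℂ))
          = ∫ y, Complex.exp (Complex.I * ((inner ℝ (ξ j) y : ℝ) : ℂ)) ∂μ} := by
      intro j
      refine measSupport_subset_closed (isClosed_eq (contF (ξ j)) continuous_const) ?_
      have := ae_eq_const_of_abs_one μ (ξ j) (habs j)
      exact ae_iff.mp this
    have hne : (measSupport μ).Nonempty := by
      by_contra h
      rw [Set.not_nonempty_iff_eq_empty] at h
      have h0 := measSupport_compl_null μ
      rw [h, Set.compl_empty, measure_univ] at h0
      exact one_ne_zero h0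
    obtain ⟨θ₀, hθ₀⟩ := hne
    refine ⟨θ₀, fun i => θB i, θB.linearIndependent, θB.span_eq, fun x hx => ?_⟩
    have key : ∀ j, ∃ m : ℤ, (inner ℝ (ξ j) x : ℝ) - inner ℝ (ξ j) θ₀ = (m : ℝ) * (2 * Real.pi) := by
      intro j
      have h1 : Complex.exp (Complex.I * ((inner ℝ (ξ j) x : ℝ) : ℂ)) =
          Complex.exp (Complex.I * ((inner ℝ (ξ j) θ₀ : ℝ) : ℂ)) := by
        rw [hsub j hx, hsub j hθ₀]
      have h2 : Complex.exp (Complex.I *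
          ((((inner ℝ (ξ j) x : ℝ) - inner ℝ (ξ j) θ₀ : ℝ)) : ℂ)) = 1 := by
        push_cast
        rw [mul_sub, Complex.exp_sub, h1, div_self (Complex.exp_ne_zero _)]
      obtain ⟨m, hm⟩ := Complex.exp_eq_one_iff.mp h2
      refine ⟨m, ?_⟩
      have hm' : ((((inner ℝ (ξ j) x : ℝ) - inner ℝ (ξ j) θ₀ : ℝ)) : ℂ) * Complex.I
          = (((m : ℝ) * (2 * Real.pi) : ℝ) : ℂ) * Complex.I := by
        push_cast
        push_cast at hm
        linear_combination hm
      exact_mod_cast mul_right_cancel₀ Complex.I_ne_zero hm'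
    choose m hm using key
    refine ⟨m, ?_⟩
    have hrepr := θB.sum_repr (x - θ₀)
    have hcoef : ∀ j, θB.repr (x - θ₀) j = (m j : ℝ) := by
      intro j
      have h1 : (inner ℝ (ξ j) (x - θ₀) : ℝ) = (2 * Real.pi) * θB.repr (x - θ₀) j := by
        conv_lhs => rw [← hrepr]
        rw [inner_sum]
        rw [Finset.sum_eq_single j]
        · rw [real_inner_smul_right, hinner j j, if_pos rfl]; ring
        · intro i _ hij
          rw [real_inner_smul_right, hinner i j, if_neg (fun h => hij h.symm), mul_zero]
        · simp
      have h2 : (inner ℝ (ξ j) (x - θ₀) : ℝ) = (2 * Real.pi) * (m j : ℝ) := by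
        rw [inner_sub_right]
        rw [hm j]; ring
      exact mul_left_cancel₀ hπ (h1.symm.trans h2)
    have hsum : ∑ i, (m i : ℝ) • θB i = x - θ₀ := by
      rw [← hrepr]
      exact Finset.sum_congr rfl (fun i _ => by rw [hcoef i])
    show x = θ₀ + ∑ i, (m i : ℝ) • θB i
    rw [hsum]
    abel
end
end

section
/- Let h be the Bernstein function h(ζ) = a·ζ + ∫_{(0,∞)} (1 − e^{−ζs}) π(ds), defined for complex ζ with Re ζ ≥ 0, where a ≥ 0 and π is a measure on (0, ∞) with ∫ min(s, 1) π(ds) < ∞. Assume that a ≠ 0 or that supp π is not a discrete subset of (0, ∞). Then for every Lévy triplet (b, Q, ν) on ℝ^n with characteristic exponent ψ (which satisfies Re ψ(ξ) ≥ 0 for all ξ, so that h(ψ(ξ)) is well defined by an absolutely convergent integral), one has {ξ ∈ ℝ^n : h(ψ(ξ)) = 0} = {ξ ∈ ℝ^n : ψ(ξ) = 0}. -/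
open MeasureTheory Complex
open scoped ENNReal Topology Pointwise

noncomputable section

lemma re_charExp_nonneg {n : ℕ} (T : LevyTriplet n) (ξ : En n) :
    0 ≤ (T.charExp ξ).re := by
  have hq : 0 ≤ ∑ i, ∑ j, T.Q i j * ξ i * ξ j := by
    have := T.hQpos.dotProduct_mulVec_nonneg (fun i => ξ i)
    simpa [dotProduct, Matrix.mulVec, Finset.mul_sum, mul_comm, mul_assoc,
      mul_left_comm] using this
  rw [LevyTriplet.charExp]
  set Iv := ∫ x, (1 - Complex.exp (Complex.I * ((inner ℝ ξ x : ℝ) : ℂ))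
        + Complex.I * ((inner ℝ ξ x : ℝ) : ℂ)
          * ({y : En n | ‖y‖ < 1}.indicator (fun _ => (1 : ℂ)) x)) ∂T.ν with hIv
  have hint : 0 ≤ Iv.re := by
    by_cases hi : Integrable (fun x : En n => (1 - Complex.exp (Complex.I * ((inner ℝ ξ x : ℝ) : ℂ))
        + Complex.I * ((inner ℝ ξ x : ℝ) : ℂ)
          * ({y : En n | ‖y‖ < 1}.indicator (fun _ => (1 : ℂ)) x))) T.ν
    · rw [hIv, ← RCLike.re_to_complex, ← integral_re hi]
      apply integral_nonneg
      intro x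
      by_cases hx : x ∈ {y : En n | ‖y‖ < 1} <;>
        simp [hx, Complex.exp_re, Real.cos_le_one]
    · rw [hIv, integral_undef hi]; simp
  simp only [Complex.add_re, Complex.mul_re, Complex.neg_re, Complex.I_re,
    Complex.ofReal_re, Complex.ofReal_im, Complex.neg_im, Complex.I_im]
  norm_num
  linarith

/-- If the Bernstein function `h` has `a ≠ 0` or non-discrete `supp π`, then
`{h ∘ ψ = 0} = {ψ = 0}`. -/
theorem statement14 {n : ℕ} (hn : 0 < n)
    (a : ℝ) (ha : 0 ≤ a) (π : Measure ℝ)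
    (hπ0 : π (Set.Iic 0) = 0)
    (hπint : ∫⁻ s, ENNReal.ofReal (min s 1) ∂π < ⊤)
    (h : ℂ → ℂ)
    (hdef : ∀ ζ : ℂ, 0 ≤ ζ.re → h ζ = a * ζ + ∫ s, (1 - Complex.exp (-ζ * (s : ℂ))) ∂π)
    (hyp : a ≠ 0 ∨
      ¬ (∀ x ∈ {s : ℝ | ∀ U : Set ℝ, IsOpen U → s ∈ U → 0 < π U} ∩ Set.Ioi 0,
          ∃ U : Set ℝ, IsOpen U ∧ x ∈ U ∧
            U ∩ ({s : ℝ | ∀ V : Set ℝ, IsOpen V → s ∈ V → 0 < π V} ∩ Set.Ioi 0) ⊆ {x}))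
    (T : LevyTriplet n) :
    {ξ : En n | h (T.charExp ξ) = 0} = {ξ : En n | T.charExp ξ = 0} := by
  ext ξ
  simp only [Set.mem_setOf_eq]
  constructor
  · intro h0
    set ζ := T.charExp ξ with hζdef
    have hre : 0 ≤ ζ.re := re_charExp_nonneg T ξ
    rw [hdef ζ hre] at h0
    -- a.e. positivity
    have hae : ∀ᵐ s ∂π, 0 < s := by
      rw [ae_iff]
      convert hπ0 using 2
      ext s; simp [not_lt]
    -- integrability of the bound
    have hmin : Integrable (fun s : ℝ => min s 1) π := by
      refine ⟨(continuous_id.min continuous_const).aestronglyMeasurable, ?_⟩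
      have heq : ∫⁻ s, (‖min s 1‖₊ : ℝ≥0∞) ∂π = ∫⁻ s, ENNReal.ofReal (min s 1) ∂π := by
        refine lintegral_congr_ae (hae.mono fun s hs => ?_)
        exact Real.enorm_eq_ofReal (le_min hs.le zero_le_one)
      show ∫⁻ s, (‖min s 1‖₊ : ℝ≥0∞) ∂π < ⊤
      rw [heq]; exact hπint
    -- integrability of the integrand
    have hgcont : Continuous (fun s : ℝ => 1 - Complex.exp (-ζ * (s : ℂ))) := by fun_prop
    have hgint : Integrable (fun s : ℝ => 1 - Complex.exp (-ζ * (s : ℂ))) π := by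
      refine Integrable.mono' (hmin.const_mul (2 * max ‖ζ‖ 1)) hgcont.aestronglyMeasurable ?_
      refine hae.mono fun s hs => ?_
      have hM1 : (1:ℝ) ≤ max ‖ζ‖ 1 := le_max_right _ _
      have hMζ : ‖ζ‖ ≤ max ‖ζ‖ 1 := le_max_left _ _
      have h2 : ‖1 - Complex.exp (-ζ * (s:ℂ))‖ ≤ 2 := by
        calc ‖1 - Complex.exp (-ζ * (s:ℂ))‖ ≤ ‖(1:ℂ)‖ + ‖Complex.exp (-ζ * (s:ℂ))‖ :=
              norm_sub_le _ _
        _ ≤ 2 := by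
            have he : ‖Complex.exp (-ζ * (s:ℂ))‖ = Real.exp ((-ζ * (s:ℂ)).re) := by
              simp [Complex.norm_exp]
            have hrele : (-ζ * (s:ℂ)).re ≤ 0 := by
              simp only [Complex.mul_re, Complex.neg_re, Complex.neg_im, Complex.ofReal_re,
                Complex.ofReal_im]
              nlinarith
            have h1 : ‖(1:ℂ)‖ = 1 := norm_one
            rw [he, h1]
            linarith [Real.exp_le_one_iff.mpr hrele]
      have habs : ‖-ζ * (s:ℂ)‖ = ‖ζ‖ * s := by
        rw [norm_mul]
        simp [abs_of_pos hs]
      rcases le_or_gt (‖ζ‖ * s) 1 with hsmall | hbig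
      · have hlin : ‖1 - Complex.exp (-ζ * (s:ℂ))‖ ≤ 2 * (‖ζ‖ * s) := by
          rw [norm_sub_rev]
          have := Complex.norm_exp_sub_one_le (x := -ζ * (s:ℂ)) (by rw [habs]; exact hsmall)
          rw [habs] at this
          simpa using this
        rcases le_total s 1 with hs1 | hs1
        · rw [min_eq_left hs1]
          nlinarith
        · rw [min_eq_right hs1]
          nlinarith
      · rcases le_total s 1 with hs1 | hs1
        · rw [min_eq_left hs1]
          nlinarith
        · rw [min_eq_right hs1]
          nlinarith
    -- the real part function
    set F : ℝ → ℝ := fun s => 1 - Real.exp (-(ζ.re * s)) * Real.cos (ζ.im * s) with hFdef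
    have hreim : ∀ s : ℝ, (1 - Complex.exp (-ζ * (s:ℂ))).re = F s ∧
        (1 - Complex.exp (-ζ * (s:ℂ))).im = Real.exp (-(ζ.re * s)) * Real.sin (ζ.im * s) := by
      intro s
      constructor
      · simp [hFdef, Complex.sub_re, Complex.exp_re, Complex.mul_re, Complex.mul_im,
          Real.cos_neg]
      · simp [Complex.sub_im, Complex.exp_im, Complex.mul_re, Complex.mul_im, Real.sin_neg,
          Real.cos_neg]
    have hFint : Integrable F π := by
      have := hgint.re
      exact this.congr (Filter.Eventually.of_forall fun s => (hreim s).1)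
    have hFnn : ∀ᵐ s ∂π, 0 ≤ F s := by
      refine hae.mono fun s hs => ?_
      have hA1 : Real.exp (-(ζ.re * s)) ≤ 1 := Real.exp_le_one_iff.mpr (by nlinarith)
      have hAp : 0 < Real.exp (-(ζ.re * s)) := Real.exp_pos _
      have hc1 : Real.cos (ζ.im * s) ≤ 1 := Real.cos_le_one _
      have hc2 : -1 ≤ Real.cos (ζ.im * s) := Real.neg_one_le_cos _
      simp only [hFdef]
      nlinarith
    -- real part of the integral
    have hIre : (∫ s, (1 - Complex.exp (-ζ * (s:ℂ))) ∂π).re = ∫ s, F s ∂π := by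
      rw [← RCLike.re_to_complex, ← integral_re hgint]
      exact integral_congr_ae (Filter.Eventually.of_forall fun s => (hreim s).1)
    have h0re : a * ζ.re + ∫ s, F s ∂π = 0 := by
      have := congrArg Complex.re h0
      simp only [Complex.add_re, Complex.mul_re, Complex.ofReal_re, Complex.ofReal_im,
        Complex.zero_re, zero_mul, sub_zero] at this
      rw [hIre] at this
      linarith
    have haζ : 0 ≤ a * ζ.re := mul_nonneg ha hre
    have hIF : 0 ≤ ∫ s, F s ∂π := integral_nonneg_of_ae hFnn
    have hIF0 : ∫ s, F s ∂π = 0 := by linarith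
    have haζ0 : a * ζ.re = 0 := by linarith
    have hF0 : F =ᵐ[π] 0 := (integral_eq_zero_iff_of_nonneg_ae hFnn hFint).mp hIF0
    rcases hyp with haa | hnd
    · -- case a ≠ 0
      have hre0 : ζ.re = 0 := by
        rcases mul_eq_zero.mp haζ0 with h' | h'
        · exact absurd h' haa
        · exact h'
      have hsin : ∀ᵐ s ∂π, Real.sin (ζ.im * s) = 0 := by
        refine hF0.mono fun s hs => ?_
        simp only [hFdef, hre0, zero_mul, neg_zero, Real.exp_zero, one_mul, Pi.zero_apply] at hs
        have hcos : Real.cos (ζ.im * s) = 1 := by linarith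
        have := Real.sin_sq_add_cos_sq (ζ.im * s)
        rw [hcos] at this
        have hsq : Real.sin (ζ.im * s) ^ 2 = 0 := by nlinarith
        exact pow_eq_zero_iff (by norm_num) |>.mp hsq
      have hIim : (∫ s, (1 - Complex.exp (-ζ * (s:ℂ))) ∂π).im = 0 := by
        rw [← RCLike.im_to_complex, ← integral_im hgint]
        rw [show (0:ℝ) = ∫ s : ℝ, (0:ℝ) ∂π by simp]
        refine integral_congr_ae (hsin.mono fun s hs => ?_)
        simp only [RCLike.im_to_complex]
        rw [(hreim s).2, hs, mul_zero]
      have him0 : ζ.im = 0 := by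
        have := congrArg Complex.im h0
        simp only [Complex.add_im, Complex.mul_im, Complex.ofReal_re, Complex.ofReal_im,
          Complex.zero_im, hIim, zero_mul, add_zero, zero_add, mul_zero] at this
        rcases mul_eq_zero.mp this with h' | h'
        · exact absurd h' haa
        · exact h'
      exact Complex.ext hre0 him0
    · -- case non-discrete support
      push_neg at hnd
      obtain ⟨x, hxS, hxacc⟩ := hnd
      have hS0 : ∀ s₀ : ℝ, (∀ U : Set ℝ, IsOpen U → s₀ ∈ U → 0 < π U) → F s₀ = 0 := by
        intro s₀ hs₀
        by_contra hne
        have hFcont : Continuous F := by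
          simp only [hFdef]; fun_prop
        have hopen : IsOpen {s : ℝ | F s ≠ 0} := by
          have : {s : ℝ | F s ≠ 0} = F ⁻¹' ({0}ᶜ) := rfl
          rw [this]
          exact isOpen_compl_singleton.preimage hFcont
        have hpos := hs₀ _ hopen hne
        have hz : π {s : ℝ | ¬ F s = (0:ℝ → ℝ) s} = 0 := by
          have := hF0
          rwa [Filter.EventuallyEq, ae_iff] at this
        simp only [Pi.zero_apply] at hz
        rw [show {s : ℝ | F s ≠ 0} = {s : ℝ | ¬ F s = 0} from rfl, hz] at hpos
        exact lt_irrefl _ hpos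
      have hxpos : (0:ℝ) < x := hxS.2
      have hx0 : F x = 0 := hS0 x hxS.1
      have hA : Real.exp (-(ζ.re * x)) * Real.cos (ζ.im * x) = 1 := by
        simp only [hFdef] at hx0; linarith
      have hre0 : ζ.re = 0 := by
        have hA1 : Real.exp (-(ζ.re * x)) ≤ 1 := Real.exp_le_one_iff.mpr (by nlinarith)
        have hAp : 0 < Real.exp (-(ζ.re * x)) := Real.exp_pos _
        have hc1 : Real.cos (ζ.im * x) ≤ 1 := Real.cos_le_one _
        have hexp1 : Real.exp (-(ζ.re * x)) = 1 := by nlinarith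
        have hinj : -(ζ.re * x) = 0 := by
          have : Real.exp (-(ζ.re * x)) = Real.exp 0 := by rw [Real.exp_zero]; exact hexp1
          exact Real.exp_injective this
        have h' : ζ.re * x = 0 := by linarith
        rcases mul_eq_zero.mp h' with h'' | h''
        · exact h''
        · exact absurd h'' (ne_of_gt hxpos)
      have hcosS : ∀ s : ℝ, (∀ U : Set ℝ, IsOpen U → s ∈ U → 0 < π U) →
          Real.cos (ζ.im * s) = 1 := by
        intro s hs
        have := hS0 s hs
        simp only [hFdef, hre0, zero_mul, neg_zero, Real.exp_zero, one_mul] at this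
        linarith
      have him0 : ζ.im = 0 := by
        by_contra him
        have himabs : 0 < |ζ.im| := abs_pos.mpr him
        have hδ : 0 < Real.pi / |ζ.im| := div_pos Real.pi_pos himabs
        refine hxacc (Set.Ioo (x - Real.pi / |ζ.im|) (x + Real.pi / |ζ.im|)) isOpen_Ioo
          ⟨by linarith, by linarith⟩ ?_
        rintro s ⟨hsU, hsS⟩
        have hc_s : Real.cos (ζ.im * s) = 1 := hcosS s hsS.1
        have hc_x : Real.cos (ζ.im * x) = 1 := hcosS x hxS.1
        obtain ⟨k, hk⟩ := (Real.cos_eq_one_iff _).mp hc_s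
        obtain ⟨m, hm⟩ := (Real.cos_eq_one_iff _).mp hc_x
        have hdist : |s - x| < Real.pi / |ζ.im| := by
          rw [abs_sub_lt_iff]
          exact ⟨by linarith [hsU.2], by linarith [hsU.1]⟩
        have hkm : ((k - m : ℤ) : ℝ) * (2 * Real.pi) = ζ.im * (s - x) := by
          push_cast; nlinarith [hk, hm]
        have hkm0 : (k - m : ℤ) = 0 := by
          by_contra hkm'
          have h1le : (1:ℝ) ≤ |((k - m : ℤ) : ℝ)| := by
            rw [← Int.cast_abs]
            exact_mod_cast Int.one_le_abs (by exact hkm')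
          have habs2 : |((k - m : ℤ) : ℝ)| * (2 * Real.pi) = |ζ.im| * |s - x| := by
            have h' : |((k - m : ℤ) : ℝ) * (2 * Real.pi)| = |ζ.im * (s - x)| := by rw [hkm]
            rw [abs_mul ((k - m : ℤ) : ℝ) (2 * Real.pi), abs_mul ζ.im (s - x),
              abs_of_pos (by positivity : (0:ℝ) < 2 * Real.pi)] at h'
            exact h'
          have hlt : |ζ.im| * |s - x| < Real.pi := by
            have := mul_lt_mul_of_pos_left hdist himabs
            rwa [mul_div_cancel₀ _ (ne_of_gt himabs)] at this
          have h2π : 2 * Real.pi ≤ |((k - m : ℤ) : ℝ)| * (2 * Real.pi) :=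
            le_mul_of_one_le_left (by positivity) h1le
          linarith [Real.pi_pos]
        have : ζ.im * (s - x) = 0 := by
          rw [← hkm, hkm0]; simp
        have hsx : s - x = 0 := by
          rcases mul_eq_zero.mp this with h' | h'
          · exact absurd h' him
          · exact h'
        show s ∈ ({x} : Set ℝ)
        simp only [Set.mem_singleton_iff]
        linarith
      exact Complex.ext hre0 him0
  · intro h0
    rw [h0, hdef 0 (by norm_num)]
    simp
end
end
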